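/- arXiv:1806.03123 — 11 statements merged into one kernel-verified Lean document; each statement's English description precedes it below -/
import Mathlib

section
/- For every element x of the field F_p((X)) of Laurent series over F_p, x can be written as x = a + b + c, where a lies in the sum of the subgroups M^p·X^i for i = 1, ..., p-1 (M = F_p((X)), M^p the set of p-th powers), b lies in the image of the Artin-Schreier map z ↦ z^p − z, and c lies in the valuation ring F_p[[X]]. -/
/-! In characteristic `p` the three pieces `C(M)`, `℘(M)` and `O` are additive subgroups, so it
suffices to reach every monomial `c X^n` with `n < 0`; the principal part of a Laurent series is
then peeled off one monomial at a time. Write `n = p q + r` with `0 ≤ r < p` and `c = d ^ p`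
(the coefficients form a perfect ring). If `r ≠ 0` then `c X^n = (d X^q) ^ p X^r ∈ C(M)`. If
`r = 0` then `c X^n = ℘(d X^q) + d X^q` with `n < q < 0`, and induction on `-n` applies. -/

open HahnSeries
open scoped PowerSeries

noncomputable section

section CharP

variable {S : Type*} [CommRing S] (p : ℕ) [Fact p.Prime] [CharP S p]

def artinSchreier : S →+ S := (frobenius S p).toAddMonoidHom - AddMonoidHom.id S

def twistedPowerSum (t : S) : (ℕ → S) →+ S :=
  ∑ i ∈ Finset.Icc 1 (p - 1), (AddMonoidHom.mulRight (t ^ i)).comp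
    ((frobenius S p).toAddMonoidHom.comp (Pi.evalAddMonoidHom (fun _ => S) i))

theorem twistedPowerSum_apply (t : S) (f : ℕ → S) :
    twistedPowerSum p t f = ∑ i ∈ Finset.Icc 1 (p - 1), f i ^ p * t ^ i := by
  simp [twistedPowerSum, frobenius_def]

theorem twistedPowerSum_pi_single (t z : S) {i : ℕ} (hi : i ∈ Finset.Icc 1 (p - 1)) :
    twistedPowerSum p t (Pi.single i z) = z ^ p * t ^ i := by
  rw [twistedPowerSum_apply, Finset.sum_eq_single_of_mem i hi fun j _ hj => ?_,
    Pi.single_eq_same]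
  rw [Pi.single_eq_of_ne hj, zero_pow (Fact.out : p.Prime).ne_zero, zero_mul]

end CharP

namespace LaurentSeries

variable {R : Type*} [CommRing R]

theorem exists_ofPowerSeries_eq_of_coeff_neg {x : R⸨X⸩} (hx : ∀ i < 0, x.coeff i = 0) :
    ∃ g : R⟦X⟧, ofPowerSeries ℤ R g = x := by
  refine ⟨PowerSeries.mk fun n => x.coeff n, ?_⟩
  ext i
  rw [PowerSeries.coeff_coe]
  split_ifs with hi
  · exact (hx i hi).symm
  · rw [PowerSeries.coeff_mk, Int.natAbs_of_nonneg (not_lt.1 hi)]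

variable {p : ℕ} [Fact p.Prime] [CharP R p]

instance : CharP R⸨X⸩ p := charP_of_injective_ringHom C_injective p

variable (R p) in
/-- `C(M) + ℘(M) + O` in the paper's notation, where `X = single 1 1`. -/
def decompositionSubgroup : AddSubgroup R⸨X⸩ :=
  (twistedPowerSum p (single 1 1 : R⸨X⸩)).range ⊔ (artinSchreier (S := R⸨X⸩) p).range ⊔
    (ofPowerSeries ℤ R).toAddMonoidHom.range

theorem mem_decompositionSubgroup_of_coeff_neg {x : R⸨X⸩} (hx : ∀ i < 0, x.coeff i = 0) :
    x ∈ decompositionSubgroup R p := by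
  obtain ⟨g, rfl⟩ := exists_ofPowerSeries_eq_of_coeff_neg hx
  exact AddSubgroup.mem_sup_right ⟨g, rfl⟩

theorem pow_sub_self_mem_decompositionSubgroup (z : R⸨X⸩) :
    z ^ p - z ∈ decompositionSubgroup R p :=
  AddSubgroup.mem_sup_left (AddSubgroup.mem_sup_right ⟨z, rfl⟩)

theorem pow_mem_decompositionSubgroup {z : R⸨X⸩} (hz : z ∈ decompositionSubgroup R p) :
    z ^ p ∈ decompositionSubgroup R p := by
  simpa using add_mem (pow_sub_self_mem_decompositionSubgroup z) hz

theorem pow_mul_X_pow_mem_decompositionSubgroup (z : R⸨X⸩) {i : ℕ}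
    (hi : i ∈ Finset.Icc 1 (p - 1)) :
    z ^ p * single 1 1 ^ i ∈ decompositionSubgroup R p :=
  AddSubgroup.mem_sup_left (AddSubgroup.mem_sup_left
    ⟨Pi.single i z, twistedPowerSum_pi_single p _ z hi⟩)

section PerfectRing

variable [PerfectRing R p]

theorem single_mem_decompositionSubgroup (n : ℤ) (c : R) :
    single n c ∈ decompositionSubgroup R p := by
  rcases le_or_gt 0 n with hn | hn
  · exact mem_decompositionSubgroup_of_coeff_neg fun i hi => coeff_single_of_ne (by omega)
  obtain ⟨d, rfl⟩ := surjective_frobenius R p c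
  have hp : (0 : ℤ) < p := by exact_mod_cast (Fact.out : p.Prime).pos
  have hdiv : (p : ℤ) * (n / p) + n % p = n := Int.mul_ediv_add_emod n p
  have hpow : (single (n / p) d : R⸨X⸩) ^ p = single (p * (n / p)) (frobenius R p d) := by
    rw [single_pow, nsmul_eq_mul, frobenius_def]
  by_cases hr : n % p = 0
  · have hq : n < n / p := by nlinarith [(Fact.out : p.Prime).two_le]
    rw [hr, add_zero] at hdiv
    rw [← hdiv, ← hpow]
    exact pow_mem_decompositionSubgroup (single_mem_decompositionSubgroup (n / p) d)
  · have hr' : (n % p).toNat ∈ Finset.Icc 1 (p - 1) := by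
      have := Int.emod_nonneg n hp.ne'
      have := Int.emod_lt_of_pos n hp
      simp only [Finset.mem_Icc]
      omega
    convert pow_mul_X_pow_mem_decompositionSubgroup (single (n / p) d) hr' using 1
    rw [hpow, single_pow, single_mul_single, one_pow, mul_one, nsmul_one,
      Int.toNat_of_nonneg (Int.emod_nonneg n hp.ne'), hdiv]
termination_by (-n).toNat
decreasing_by omega

theorem mem_decompositionSubgroup_of_coeff_lt (N : ℕ) {x : R⸨X⸩}
    (hx : ∀ i < -(N : ℤ), x.coeff i = 0) : x ∈ decompositionSubgroup R p := by
  induction N generalizing x with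
  | zero => exact mem_decompositionSubgroup_of_coeff_neg (by simpa using hx)
  | succ N ih =>
    set m : ℤ := -(N + 1)
    have htail : ∀ i < -(N : ℤ), (x - single m (x.coeff m)).coeff i = 0 := by
      intro i hi
      rcases lt_or_eq_of_le (show i ≤ m by omega) with hi | rfl
      · simp [hx i (by push_cast; omega), coeff_single_of_ne hi.ne]
      · simp
    simpa using add_mem (ih htail) (single_mem_decompositionSubgroup m (x.coeff m))

theorem decompositionSubgroup_eq_top : decompositionSubgroup R p = ⊤ :=
  eq_top_iff.2 fun x _ => mem_decompositionSubgroup_of_coeff_lt (-x.order).toNat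
    fun _ hi => coeff_eq_zero_of_lt_order (by omega)

end PerfectRing

end LaurentSeries

end

/-- every Laurent series over `F_p` is a sum `a + b + c` where `a` lies in
`Σ_{i=1}^{p-1} M^p · X^i`, `b` lies in the image of the Artin-Schreier map `z ↦ z^p - z`,
and `c` lies in the valuation ring `F_p[[X]]`. -/
theorem stmt_0 (p : ℕ) (hp : p.Prime) (x : LaurentSeries (ZMod p)) :
    ∃ a b c : LaurentSeries (ZMod p),
      x = a + b + c ∧
      (∃ f : ℕ → LaurentSeries (ZMod p),
        a = ∑ i ∈ Finset.Icc 1 (p - 1),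
          (f i) ^ p * (HahnSeries.single (1 : ℤ) (1 : ZMod p)) ^ i) ∧
      (∃ z : LaurentSeries (ZMod p), b = z ^ p - z) ∧
      (∃ g : PowerSeries (ZMod p), c = HahnSeries.ofPowerSeries ℤ (ZMod p) g) := by
  have : Fact p.Prime := ⟨hp⟩
  have hx : x ∈ LaurentSeries.decompositionSubgroup (ZMod p) p :=
    (LaurentSeries.decompositionSubgroup_eq_top (R := ZMod p) (p := p)) ▸ AddSubgroup.mem_top x
  obtain ⟨_, hab, _, ⟨g, rfl⟩, rfl⟩ := AddSubgroup.mem_sup.1 hx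
  obtain ⟨_, ⟨f, rfl⟩, _, ⟨z, rfl⟩, rfl⟩ := AddSubgroup.mem_sup.1 hab
  exact ⟨_, _, _, rfl, ⟨f, twistedPowerSum_apply p _ f⟩, ⟨z, rfl⟩, ⟨g, rfl⟩⟩
end

section
/- In F_p((X)), the intersection of the image of the Artin-Schreier map ℘(z) = z^p − z with the valuation ring F_p[[X]] equals the maximal ideal X·F_p[[X]]. -/
/-!
Both inclusions are statements about the Artin–Schreier polynomial `T ^ p - T - x`, which is
monic with derivative `-1`. Since `F_p[[X]]` is integrally closed in its fraction field
`F_p((X))`, a root `z` of it with `x ∈ F_p[[X]]` already lies in `F_p[[X]]`, and then `x` has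
constant term `c ^ p - c = 0`. Conversely, `F_p[[X]]` is `X`-adically complete, hence Henselian,
and for `x ∈ X·F_p[[X]]` the polynomial has the simple root `0` modulo `X`, which lifts to a
root.
-/

open Polynomial

theorem Polynomial.monic_X_pow_sub_X_sub_C {R : Type*} [Ring R] {n : ℕ} (hn : 2 ≤ n) (x : R) :
    (X ^ n - X - C x).Monic := by
  rw [sub_sub]
  refine monic_X_pow_sub ((degree_add_le _ _).trans_lt ?_)
  exact (max_le degree_X_le (degree_C_le.trans zero_le_one)).trans_lt (by exact_mod_cast hn)

theorem HenselianRing.exists_pow_sub_self_eq {R : Type*} [CommRing R] {I : Ideal R}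
    [HenselianRing R I] {n : ℕ} (hn : 2 ≤ n) {x : R} (hx : x ∈ I) :
    ∃ a : R, a ^ n - a = x := by
  obtain ⟨a, ha, -⟩ := HenselianRing.is_henselian _ (monic_X_pow_sub_X_sub_C hn x) 0
    (by simpa [zero_pow (by omega : n ≠ 0)] using I.neg_mem hx)
    (by simp [derivative_X_pow, zero_pow (by omega : n - 1 ≠ 0)])
  exact ⟨a, by simpa [sub_eq_zero] using ha⟩

theorem IsIntegrallyClosedIn.exists_algebraMap_eq_of_pow_sub_self_eq {R A : Type*} [CommRing R]
    [CommRing A] [Algebra R A] [IsIntegrallyClosedIn R A] {n : ℕ} (hn : 2 ≤ n) {z : A} {x : R}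
    (hz : z ^ n - z = algebraMap R A x) : ∃ a : R, algebraMap R A a = z :=
  IsIntegrallyClosedIn.algebraMap_eq_of_integral
    ⟨X ^ n - X - C x, monic_X_pow_sub_X_sub_C hn x, by simp [hz]⟩

theorem PowerSeries.X_dvd_pow_card_sub_self {K : Type*} [Field K] [Fintype K] (a : PowerSeries K) :
    PowerSeries.X ∣ a ^ Fintype.card K - a := by
  rw [PowerSeries.X_dvd_iff, map_sub, map_pow, FiniteField.pow_card, sub_self]

/-- in `F_p((X))`, the intersection of the image of the Artin-Schreier map
`℘(z) = z^p - z` with the valuation ring `F_p[[X]]` equals the maximal ideal `X·F_p[[X]]`. -/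
theorem stmt_1 (p : ℕ) (hp : p.Prime) :
    {x : LaurentSeries (ZMod p) | (∃ z : LaurentSeries (ZMod p), x = z ^ p - z) ∧
        ∃ g : PowerSeries (ZMod p), x = HahnSeries.ofPowerSeries ℤ (ZMod p) g} =
      {x : LaurentSeries (ZMod p) |
        ∃ g : PowerSeries (ZMod p),
          x = HahnSeries.ofPowerSeries ℤ (ZMod p) (PowerSeries.X * g)} := by
  have : Fact p.Prime := ⟨hp⟩
  ext x
  constructor
  · rintro ⟨⟨z, rfl⟩, g, hg⟩
    obtain ⟨a, rfl⟩ :=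
      IsIntegrallyClosedIn.exists_algebraMap_eq_of_pow_sub_self_eq hp.two_le hg
    have hga : g = a ^ p - a :=
      HahnSeries.ofPowerSeries_injective (Γ := ℤ) (by simpa using hg.symm)
    obtain ⟨g', hg'⟩ := ZMod.card p ▸ PowerSeries.X_dvd_pow_card_sub_self a
    exact ⟨g', by rw [hg, hga, hg']⟩
  · rintro ⟨g, rfl⟩
    obtain ⟨a, ha⟩ := HenselianRing.exists_pow_sub_self_eq (I := Ideal.span {PowerSeries.X})
      hp.two_le (Ideal.mem_span_singleton.mpr (dvd_mul_right _ g))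
    exact ⟨⟨HahnSeries.ofPowerSeries ℤ (ZMod p) a, by simp [← ha]⟩, _, rfl⟩
end

section
/- In F_p((X)), the intersection of ℘(M) with C(M) = Σ_{i=1}^{p-1} M^p·X^i is contained in the valuation ring F_p[[X]]. -/
/-!
In characteristic `p` a `p`-th power `f ^ p` only has monomials of degree divisible by `p`
(Frobenius), so every element of `C(M)` has vanishing coefficients at all multiples of `p`.
If `z` had negative order `v`, then `z ^ p - z` would have the nonzero coefficient of `z ^ p`
at `p * v < v`. Hence `z`, and with it `z ^ p - z`, is a power series.
-/

open HahnSeries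

theorem PowerSeries.coeff_pow_expChar_of_not_dvd {R : Type*} [CommRing R] {p : ℕ} [ExpChar R p]
    (f : PowerSeries R) {n : ℕ} (hn : ¬ p ∣ n) : coeff n (f ^ p) = 0 := by
  rw [← MvPowerSeries.map_frobenius_expand p (expChar_ne_zero R p)]
  exact (congrArg (frobenius R p) (coeff_expand_of_not_dvd p _ f hn)).trans (map_zero _)

namespace LaurentSeries

variable {R : Type*}

section ExpChar

variable [CommRing R] {p : ℕ} [ExpChar R p]

theorem coeff_pow_expChar_of_not_dvd (f : LaurentSeries R) {n : ℤ} (hn : ¬ (p : ℤ) ∣ n) :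
    (f ^ p).coeff n = 0 := by
  have hfp : f ^ p = single (p * f.order) 1 * ofPowerSeries ℤ R (f.powerSeriesPart ^ p) := by
    conv_lhs => rw [← single_order_mul_powerSeriesPart f]
    rw [mul_pow, single_pow, one_pow, map_pow, nsmul_eq_mul]
  obtain ⟨m, rfl⟩ : ∃ m, n = m + p * f.order := ⟨n - p * f.order, by ring⟩
  have hm : ¬ p ∣ m.natAbs := fun h => hn (dvd_add (Int.natCast_dvd.mpr h) (dvd_mul_right _ _))
  rw [hfp, coeff_single_mul_add, one_mul, PowerSeries.coeff_coe]
  split_ifs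
  · rfl
  · exact PowerSeries.coeff_pow_expChar_of_not_dvd _ hm

theorem coeff_pow_mul_single_of_dvd (f : LaurentSeries R) (r : R) {i n : ℤ}
    (hi : ¬ (p : ℤ) ∣ i) (hn : (p : ℤ) ∣ n) : (f ^ p * single i r).coeff n = 0 := by
  obtain ⟨m, rfl⟩ : ∃ m, n = m + i := ⟨n - i, by ring⟩
  rw [coeff_mul_single_add, coeff_pow_expChar_of_not_dvd, zero_mul]
  exact fun hm => hi ((dvd_add_right hm).mp hn)

theorem coeff_sum_pow_mul_X_pow_of_dvd (f : ℕ → LaurentSeries R) {s : Finset ℕ}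
    (hs : ∀ i ∈ s, ¬ p ∣ i) {n : ℤ} (hn : (p : ℤ) ∣ n) :
    (∑ i ∈ s, f i ^ p * single (1 : ℤ) (1 : R) ^ i).coeff n = 0 := by
  rw [coeff_sum]
  refine Finset.sum_eq_zero fun i hi => ?_
  rw [single_pow, nsmul_one]
  exact coeff_pow_mul_single_of_dvd _ _ (by exact_mod_cast hs i hi) hn

end ExpChar

theorem coeff_pow_sub_self_ne_zero_of_order_neg [Ring R] [NoZeroDivisors R] {n : ℕ}
    (hn : 2 ≤ n) {z : LaurentSeries R} (hz : z.order < 0) :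
    (z ^ n - z).coeff (n * z.order) ≠ 0 := by
  have hz0 : z ≠ 0 := by rintro rfl; simp at hz
  have hlt : n * z.order < z.order := by nlinarith
  rw [coeff_sub, coeff_eq_zero_of_lt_order hlt, sub_zero, ← nsmul_eq_mul, ← order_pow]
  exact coeff_order_eq_zero.not.mpr (pow_ne_zero n hz0)

theorem exists_powerSeries_eq_of_order_nonneg [Semiring R] {z : LaurentSeries R}
    (hz : 0 ≤ z.order) : ∃ g : PowerSeries R, z = ofPowerSeries ℤ R g :=
  ⟨_, (X_order_mul_powerSeriesPart (Int.natAbs_of_nonneg hz)).symm⟩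

end LaurentSeries

open LaurentSeries in
/-- in `F_p((X))`, the intersection of `℘(M)` with
`C(M) = Σ_{i=1}^{p-1} M^p · X^i` is contained in the valuation ring `F_p[[X]]`. -/
theorem stmt_2 (p : ℕ) (hp : p.Prime) (x : LaurentSeries (ZMod p))
    (hx1 : ∃ z : LaurentSeries (ZMod p), x = z ^ p - z)
    (hx2 : ∃ f : ℕ → LaurentSeries (ZMod p),
      x = ∑ i ∈ Finset.Icc 1 (p - 1),
        (f i) ^ p * (HahnSeries.single (1 : ℤ) (1 : ZMod p)) ^ i) :
    ∃ g : PowerSeries (ZMod p), x = HahnSeries.ofPowerSeries ℤ (ZMod p) g := by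
  have : Fact p.Prime := ⟨hp⟩
  obtain ⟨z, rfl⟩ := hx1
  obtain ⟨f, hf⟩ := hx2
  have hcoeff : ∀ n : ℤ, (p : ℤ) ∣ n → (z ^ p - z).coeff n = 0 := fun n hn => by
    rw [hf]
    refine coeff_sum_pow_mul_X_pow_of_dvd f (fun i hi => ?_) hn
    obtain ⟨hi1, hip⟩ := Finset.mem_Icc.mp hi
    exact Nat.not_dvd_of_pos_of_lt hi1 (by omega)
  have hord : 0 ≤ z.order := by
    by_contra! hneg
    exact coeff_pow_sub_self_ne_zero_of_order_neg hp.two_le hneg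
      (hcoeff _ (dvd_mul_right _ _))
  obtain ⟨w, rfl⟩ := exists_powerSeries_eq_of_order_nonneg hord
  exact ⟨w ^ p - w, by rw [map_sub, map_pow]⟩
end

section
/- Let (F, v) be a henselian valued field and let G be a polynomial over the valuation ring O with G(0) = 0 and G'(0) = a ≠ 0. Define A_1 = {γ ∈ Γ : G_v(γ) < (G − aT)_v(γ)} (where H_v denotes the tropicalization γ ↦ min_i (i·γ + v(coefficient of T^i in H))), A_2 = {γ + v(a) : γ ∈ A_1}, B_1 = v^{-1}(A_1), B_2 = v^{-1}(A_2). Then G restricts to a bijection from B_1 onto B_2. -/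
/-!
Write `G = aT + H`. The condition `γ ∈ A₁` says that the linear term dominates on the ball
`v x ≥ γ`: there `v (H x - H z) > v a + v (x - z)`, so `v (G x - G z) = v a + v (x - z)`. This
gives injectivity, and with `z = 0` that `G` maps `B₁` into `B₂`. For surjectivity onto `y`, put
`c = y / a` and look for `x = c (1 + t)`: the equation `G x = y` becomes
`t + y⁻¹ H (c (1 + t)) = 0`, whose coefficients other than the linear one have positive
valuation, so henselianity gives a root `t` with `v t > 0`.
-/

open Polynomial

/-- The tropicalization of a polynomial `G` at `γ`: `min_i (i·γ + v(a_i))`. -/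
def trop {F : Type*} [Field F] {Γ : Type*} [AddCommGroup Γ] [LinearOrder Γ] [IsOrderedAddMonoid Γ]
    (v : F → WithTop Γ) (G : Polynomial F) (γ : Γ) : WithTop Γ :=
  (Finset.range (G.natDegree + 1)).inf fun i => ((i • γ : Γ) : WithTop Γ) + v (G.coeff i)

section Tropicalization

variable {F : Type*} [Field F] {Γ : Type*} [AddCommGroup Γ] [LinearOrder Γ]
  [IsOrderedAddMonoid Γ] {v : F → WithTop Γ}

theorem trop_le (hv : v 0 = ⊤) (G : F[X]) (γ : Γ) (i : ℕ) :
    trop v G γ ≤ ((i • γ : Γ) : WithTop Γ) + v (G.coeff i) := by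
  by_cases hi : i ≤ G.natDegree
  · exact Finset.inf_le (Finset.mem_range.2 (Nat.lt_succ_of_le hi))
  · rw [coeff_eq_zero_of_natDegree_lt (not_le.1 hi), hv, add_top]
    exact le_top

theorem le_trop_iff (hv : v 0 = ⊤) {G : F[X]} {γ : Γ} {c : WithTop Γ} :
    c ≤ trop v G γ ↔ ∀ i : ℕ, c ≤ ((i • γ : Γ) : WithTop Γ) + v (G.coeff i) :=
  ⟨fun h i => h.trans (trop_le hv G γ i), fun h => Finset.le_inf fun i _ => h i⟩

theorem lt_trop_iff (hv : v 0 = ⊤) {G : F[X]} {γ : Γ} {c : WithTop Γ} :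
    c < trop v G γ ↔ ∀ i : ℕ, c < ((i • γ : Γ) : WithTop Γ) + v (G.coeff i) :=
  ⟨fun h i => h.trans_le (trop_le hv G γ i),
    fun h => (Finset.lt_inf_iff ((h 0).trans_le le_top)).2 fun i _ => h i⟩

theorem trop_eq_min_trop_sub (hv : v 0 = ⊤) (G : F[X]) (γ : Γ) :
    trop v G γ = min ((γ : WithTop Γ) + v (G.coeff 1)) (trop v (G - C (G.coeff 1) * X) γ) := by
  have hcoeff : ∀ i ≠ 1, (G - C (G.coeff 1) * X).coeff i = G.coeff i := fun i hi => by
    simp [coeff_X, Ne.symm hi]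
  refine le_antisymm (le_min (by simpa using trop_le hv G γ 1) ((le_trop_iff hv).2 fun i => ?_))
    ((le_trop_iff hv).2 fun i => ?_)
  · rcases eq_or_ne i 1 with rfl | hi
    · simp [hv]
    · rw [hcoeff i hi]
      exact trop_le hv G γ i
  · rcases eq_or_ne i 1 with rfl | hi
    · simp
    · rw [← hcoeff i hi]
      exact (min_le_right _ _).trans (trop_le hv _ γ i)

theorem trop_lt_trop_sub_iff (hv : v 0 = ⊤) {G : F[X]} {γ : Γ} :
    trop v G γ < trop v (G - C (G.coeff 1) * X) γ ↔
      (γ : WithTop Γ) + v (G.coeff 1) < trop v (G - C (G.coeff 1) * X) γ := by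
  rw [trop_eq_min_trop_sub hv, min_lt_iff, or_iff_left (lt_irrefl _)]

end Tropicalization

namespace AddValuation

variable {F : Type*} [Field F] {Γ : Type*} [AddCommGroup Γ] [LinearOrder Γ]
  [IsOrderedAddMonoid Γ]
  (w : AddValuation F (WithTop Γ))

def IsHenselian : Prop :=
  ∀ f : F[X], (∀ i, (0 : WithTop Γ) ≤ w (f.coeff i)) →
    2 • w (f.coeff 1) < w (f.coeff 0) →
    ∃ b, f.eval b = 0 ∧ w b + w (f.coeff 1) = w (f.coeff 0)

theorem natCast_nonneg (n : ℕ) : 0 ≤ w (n : F) := by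
  induction n with
  | zero => simp
  | succ n ih =>
    push_cast
    exact w.map_le_add ih w.map_one.ge

theorem coe_nsmul_le_map_pow {γ : Γ} {c : F} (hc : (γ : WithTop Γ) ≤ w c) (i : ℕ) :
    ((i • γ : Γ) : WithTop Γ) ≤ w (c ^ i) := by
  rw [w.map_pow, WithTop.coe_nsmul]
  exact nsmul_le_nsmul_right hc i

theorem le_map_pow_succ_sub_pow_succ {γ : Γ} {x z : F} (hx : (γ : WithTop Γ) ≤ w x)
    (hz : (γ : WithTop Γ) ≤ w z) (j : ℕ) :
    ((j • γ : Γ) : WithTop Γ) + w (x - z) ≤ w (x ^ (j + 1) - z ^ (j + 1)) := by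
  rw [← geom_sum₂_mul, w.map_mul]
  refine add_le_add_left (w.map_le_sum fun k hk => ?_) _
  rw [Nat.add_sub_cancel]
  calc ((j • γ : Γ) : WithTop Γ)
        = ((k • γ : Γ) : WithTop Γ) + (((j - k) • γ : Γ) : WithTop Γ) := by
        rw [← WithTop.coe_add, ← add_nsmul,
          Nat.add_sub_cancel' (Finset.mem_range_succ_iff.1 hk)]
    _ ≤ w (x ^ k) + w (z ^ (j - k)) :=
        add_le_add (w.coe_nsmul_le_map_pow hx k) (w.coe_nsmul_le_map_pow hz _)
    _ = w (x ^ k * z ^ (j - k)) := (w.map_mul _ _).symm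

theorem lt_map_eval_sub_eval {p : F[X]} {γ : Γ} {α : WithTop Γ}
    (hp : ∀ i : ℕ, (γ : WithTop Γ) + α < ((i • γ : Γ) : WithTop Γ) + w (p.coeff i))
    {x z : F} (hx : (γ : WithTop Γ) ≤ w x) (hz : (γ : WithTop Γ) ≤ w z) (hxz : x ≠ z) :
    α + w (x - z) < w (p.eval x - p.eval z) := by
  have hα : α ≠ ⊤ := fun h => by simpa [h] using hp 0
  have hxz' : w (x - z) ≠ ⊤ := w.ne_top_iff.2 (sub_ne_zero.2 hxz)
  rw [eval_eq_sum_range, eval_eq_sum_range, ← Finset.sum_sub_distrib, Finset.sum_range_succ']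
  simp only [pow_zero, sub_self, add_zero]
  refine w.map_lt_sum (WithTop.add_ne_top.2 ⟨hα, hxz'⟩) fun j _ => ?_
  have hj : α < ((j • γ : Γ) : WithTop Γ) + w (p.coeff (j + 1)) := by
    have h := hp (j + 1)
    rw [succ_nsmul', WithTop.coe_add, add_assoc] at h
    exact (WithTop.add_lt_add_iff_left WithTop.coe_ne_top).1 h
  calc α + w (x - z)
      < ((j • γ : Γ) : WithTop Γ) + w (p.coeff (j + 1)) + w (x - z) :=
        WithTop.add_lt_add_right hxz' hj
    _ = w (p.coeff (j + 1)) + (((j • γ : Γ) : WithTop Γ) + w (x - z)) := by ac_rfl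
    _ ≤ w (p.coeff (j + 1) * (x ^ (j + 1) - z ^ (j + 1))) := by
        rw [w.map_mul]
        exact add_le_add_right (w.le_map_pow_succ_sub_pow_succ hx hz j) _
    _ = w (p.coeff (j + 1) * x ^ (j + 1) - p.coeff (j + 1) * z ^ (j + 1)) := by rw [mul_sub]

theorem map_eval_sub_eval {G : F[X]} {γ : Γ}
    (hγ : (γ : WithTop Γ) + w (G.coeff 1) < trop w (G - C (G.coeff 1) * X) γ)
    {x z : F} (hx : (γ : WithTop Γ) ≤ w x) (hz : (γ : WithTop Γ) ≤ w z) :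
    w (G.eval x - G.eval z) = w (G.coeff 1) + w (x - z) := by
  rcases eq_or_ne x z with rfl | hxz
  · simp
  set H := G - C (G.coeff 1) * X
  have hsplit : G.eval x - G.eval z = G.coeff 1 * (x - z) + (H.eval x - H.eval z) := by
    simp only [H, eval_sub, eval_mul, eval_C, eval_X]
    ring
  have hH := w.lt_map_eval_sub_eval ((lt_trop_iff w.map_zero).1 hγ) hx hz hxz
  rw [hsplit, w.map_add_eq_of_lt_left (by rwa [w.map_mul]), w.map_mul]

theorem lt_map_coeff_comp {p : F[X]} {c : F} {γ : Γ} {κ : WithTop Γ}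
    (hp : ∀ i : ℕ, κ < ((i • γ : Γ) : WithTop Γ) + w (p.coeff i))
    (hc : (γ : WithTop Γ) ≤ w c) (j : ℕ) : κ < w ((p.comp (C c * (X + 1))).coeff j) := by
  rw [comp_eq_sum_left, Polynomial.sum, finsetSum_coeff]
  refine w.map_lt_sum (hp 0).ne_top fun i _ => ?_
  rw [mul_pow, ← C_pow, ← mul_assoc, ← C_mul, coeff_C_mul, coeff_X_add_one_pow, w.map_mul,
    w.map_mul]
  calc κ < ((i • γ : Γ) : WithTop Γ) + w (p.coeff i) := hp i
    _ ≤ w (p.coeff i) + w (c ^ i) + w ((i.choose j : ℕ) : F) := by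
        rw [add_comm _ (w (p.coeff i))]
        exact le_add_of_le_of_nonneg (add_le_add_right (w.coe_nsmul_le_map_pow hc i) _)
          (w.natCast_nonneg _)

theorem exists_root_X_add_of_isHenselian (hhens : w.IsHenselian) {Q : F[X]}
    (hQ : ∀ j, 0 < w (Q.coeff j)) : ∃ b, 0 < w b ∧ (X + Q).eval b = 0 := by
  have hf1 : w ((X + Q).coeff 1) = 0 := by
    rw [coeff_add, coeff_X_one, w.map_add_eq_of_lt_left (by rw [w.map_one]; exact hQ 1),
      w.map_one]
  have hf : ∀ i, 0 ≤ w ((X + Q).coeff i) := fun i => by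
    rw [coeff_add, coeff_X]
    refine w.map_le_add ?_ (hQ i).le
    split_ifs <;> simp
  have hf0 : 0 < w ((X + Q).coeff 0) := by simpa using hQ 0
  obtain ⟨b, hb, hvb⟩ := hhens (X + Q) hf (by rwa [hf1, smul_zero])
  rw [hf1, add_zero] at hvb
  exact ⟨b, hvb ▸ hf0, hb⟩

theorem exists_eval_eq_of_isHenselian (hhens : w.IsHenselian)
    {G : F[X]} (ha : G.coeff 1 ≠ 0) {γ : Γ}
    (hγ : (γ : WithTop Γ) + w (G.coeff 1) < trop w (G - C (G.coeff 1) * X) γ)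
    {y : F} (hy : w y = γ + w (G.coeff 1)) :
    ∃ x, w x = γ ∧ G.eval x = y := by
  set a := G.coeff 1
  set H := G - C a * X
  have hy0 : y ≠ 0 := by
    rw [← w.ne_top_iff, hy]
    exact WithTop.add_ne_top.2 ⟨WithTop.coe_ne_top, w.ne_top_iff.2 ha⟩
  set c := y / a
  have hc : w c = γ := by
    have h : w a + w c = w a + γ := by rw [← w.map_mul, mul_div_cancel₀ y ha, hy, add_comm]
    exact (WithTop.add_left_inj (w.ne_top_iff.2 ha)).1 h
  set Q := C y⁻¹ * H.comp (C c * (X + 1))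
  have hQ : ∀ j, 0 < w (Q.coeff j) := by
    intro j
    have h : w y + 0 < w y + w (Q.coeff j) := by
      rw [add_zero, ← w.map_mul, coeff_C_mul, mul_inv_cancel_left₀ hy0]
      exact w.lt_map_coeff_comp (hy ▸ (lt_trop_iff w.map_zero).1 hγ) hc.ge j
    exact (WithTop.add_lt_add_iff_left (w.ne_top_iff.2 hy0)).1 h
  obtain ⟨b, hb0, hb⟩ := w.exists_root_X_add_of_isHenselian hhens hQ
  refine ⟨c * (b + 1), ?_, ?_⟩
  · rw [w.map_mul, hc, w.map_add_eq_of_lt_right (by rwa [w.map_one]), w.map_one, add_zero]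
  · have hG : G = C a * X + H := by simp [H]
    simp only [Q, eval_add, eval_X, eval_mul, eval_C, eval_comp, eval_one] at hb
    rw [hG, eval_add, eval_mul, eval_C, eval_X, ← mul_assoc, mul_div_cancel₀ y ha]
    field_simp at hb
    linear_combination hb

theorem injOn_eval {G : F[X]} (ha : G.coeff 1 ≠ 0) {γ : Γ}
    (hγ : (γ : WithTop Γ) + w (G.coeff 1) < trop w (G - C (G.coeff 1) * X) γ) :
    Set.InjOn (fun x => G.eval x) {x | (γ : WithTop Γ) ≤ w x} := by
  intro x hx z hz hxz
  have h := w.map_eval_sub_eval hγ hx hz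
  rw [show G.eval x = G.eval z from hxz, sub_self, w.map_zero, eq_comm,
    WithTop.add_eq_top, or_iff_right (w.ne_top_iff.2 ha), w.top_iff] at h
  exact sub_eq_zero.1 h

theorem bijOn_eval_of_isHenselian (hhens : w.IsHenselian)
    {G : F[X]} (hG0 : G.coeff 0 = 0) (ha : G.coeff 1 ≠ 0) :
    Set.BijOn (fun x => G.eval x)
      {x : F | ∃ γ : Γ, w x = γ ∧ trop w G γ < trop w (G - C (G.coeff 1) * X) γ}
      {x : F | ∃ γ : Γ, w x = (γ : WithTop Γ) + w (G.coeff 1) ∧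
        trop w G γ < trop w (G - C (G.coeff 1) * X) γ} := by
  simp only [trop_lt_trop_sub_iff w.map_zero]
  refine ⟨?_, ?_, ?_⟩
  · rintro x ⟨γ, hx, hγ⟩
    refine ⟨γ, ?_, hγ⟩
    have h := w.map_eval_sub_eval hγ hx.ge (z := 0) (by simp)
    rwa [← coeff_zero_eq_eval_zero, hG0, sub_zero, sub_zero, hx, add_comm] at h
  · rintro x ⟨γ, hx, hγ⟩ z ⟨δ, hz, hδ⟩ hxz
    rcases le_total (w x) (w z) with h | h
    · exact w.injOn_eval ha hγ hx.ge (hx ▸ h) hxz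
    · exact w.injOn_eval ha hδ (hz ▸ h) hz.ge hxz
  · rintro y ⟨γ, hy, hγ⟩
    obtain ⟨x, hx, rfl⟩ := w.exists_eval_eq_of_isHenselian hhens ha hγ hy
    exact ⟨x, ⟨γ, hx, hγ⟩, rfl⟩

end AddValuation

theorem stmt_4_general {F : Type*} [Field F] {Γ : Type*} [AddCommGroup Γ] [LinearOrder Γ] [IsOrderedAddMonoid Γ]
    (v : F → WithTop Γ)
    (hv0 : ∀ x, v x = ⊤ ↔ x = 0)
    (hvmul : ∀ x y, v (x * y) = v x + v y)
    (hvadd : ∀ x y, min (v x) (v y) ≤ v (x + y))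
    (hhens : ∀ f : Polynomial F, (∀ i, (0 : WithTop Γ) ≤ v (f.coeff i)) →
      2 • v (f.coeff 1) < v (f.coeff 0) →
      ∃ b, f.eval b = 0 ∧ v b + v (f.coeff 1) = v (f.coeff 0))
    (G : Polynomial F)
    (hG0 : G.coeff 0 = 0) (ha : G.coeff 1 ≠ 0) :
    Set.BijOn (fun x => G.eval x)
      {x : F | ∃ γ : Γ, v x = ↑γ ∧
        trop v G γ < trop v (G - C (G.coeff 1) * X) γ}
      {x : F | ∃ γ : Γ, v x = (γ : WithTop Γ) + v (G.coeff 1) ∧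
        trop v G γ < trop v (G - C (G.coeff 1) * X) γ} := by
  have hv1 : v 1 = 0 := by
    have h : v 1 + v 1 = v 1 + 0 := by rw [← hvmul, mul_one, add_zero]
    exact (WithTop.add_left_inj fun h1 => one_ne_zero ((hv0 1).1 h1)).1 h
  exact (AddValuation.of v ((hv0 0).2 rfl) hv1 hvadd hvmul).bijOn_eval_of_isHenselian hhens
    hG0 ha

/-- for a henselian valued field `(F, v)` and a polynomial `G` over the
valuation ring with `G(0) = 0` and `G'(0) = a ≠ 0`, `G` restricts to a bijection from
`B₁ = v⁻¹(A₁)` onto `B₂ = v⁻¹(A₂)`, where `A₁ = {γ : G_v(γ) < (G - aT)_v(γ)}` and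
`A₂ = {γ + v(a) : γ ∈ A₁}`. -/
theorem stmt_4 {F : Type*} [Field F] {Γ : Type*} [AddCommGroup Γ] [LinearOrder Γ] [IsOrderedAddMonoid Γ]
    (v : F → WithTop Γ)
    (hv0 : ∀ x, v x = ⊤ ↔ x = 0)
    (hvmul : ∀ x y, v (x * y) = v x + v y)
    (hvadd : ∀ x y, min (v x) (v y) ≤ v (x + y))
    (hhens : ∀ f : Polynomial F, (∀ i, (0 : WithTop Γ) ≤ v (f.coeff i)) →
      2 • v (f.coeff 1) < v (f.coeff 0) →
      ∃ b, f.eval b = 0 ∧ v b + v (f.coeff 1) = v (f.coeff 0))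
    (G : Polynomial F) (hGO : ∀ i, (0 : WithTop Γ) ≤ v (G.coeff i))
    (hG0 : G.coeff 0 = 0) (ha : G.coeff 1 ≠ 0) :
    Set.BijOn (fun x => G.eval x)
      {x : F | ∃ γ : Γ, v x = ↑γ ∧
        trop v G γ < trop v (G - C (G.coeff 1) * X) γ}
      {x : F | ∃ γ : Γ, v x = (γ : WithTop Γ) + v (G.coeff 1) ∧
        trop v G γ < trop v (G - C (G.coeff 1) * X) γ} :=
  stmt_4_general v hv0 hvmul hvadd hhens G hG0 ha
end

section
/- In a t-decomposable R-module M (one where multiplication by t is injective and M is the internal direct sum of the subgroups M·t·α_i for i = 0, ..., d−1), for every s ≥ 1, M is the internal direct sum of the subgroups M·t^s·α_i for i ranging over the induced basis α(s) of size d^s. -/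
/-! Commuting `t` past a scalar raises it to the `p^k`-th power, so
`t α_{i₁} ⋯ t α_{i_s} = t^s · ∏_j α_{i_{s-j}}^{(p^k)^j}`: the summands of the claimed
decomposition are the `s`-fold iterates `M·tα_{i₁}⋯tα_{i_s}` of `M = ⊕_i M·t·α_i`. Iterating a
unique decomposition keeps it unique, because the decomposition map of length `s + 1` is the one
of length `1` composed with `d` copies of the one of length `s`. -/

open MulOpposite

section Decomposition

variable {A M ι : Type*} [Monoid A] [AddCommMonoid M] [DistribMulAction A M] [Fintype ι]

def sumSMul (v : ι → A) (c : ι → M) : M := ∑ i, v i • c i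

def wordProd (a : ι → A) {s : ℕ} (g : Fin s → ι) : A := (List.ofFn fun j => a (g j)).prod

lemma sumSMul_wordProd_succ (a : ι → A) (s : ℕ) (c : (Fin (s + 1) → ι) → M) :
    sumSMul (wordProd a) c =
      sumSMul a fun i => sumSMul (wordProd a) fun f : Fin s → ι => c (Fin.cons i f) := by
  rw [sumSMul, ← Equiv.sum_comp (Fin.consEquiv fun _ => ι), Fintype.sum_prod_type]
  refine Finset.sum_congr rfl fun i _ => ?_
  simp only [sumSMul, Finset.smul_sum, Fin.consEquiv_apply, wordProd, List.ofFn_succ,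
    Fin.cons_zero, Fin.cons_succ, List.prod_cons, mul_smul]
  rfl

lemma bijective_sumSMul_wordProd {a : ι → A} (h : Function.Bijective (sumSMul (M := M) a))
    (s : ℕ) : Function.Bijective (sumSMul (M := M) (wordProd a (s := s))) := by
  induction s with
  | zero =>
    convert (Equiv.funUnique (Fin 0 → ι) M).bijective using 1
    funext c
    simp [sumSMul, wordProd]
  | succ s ih =>
    let uncurry : ((Fin (s + 1) → ι) → M) ≃ (ι → (Fin s → ι) → M) :=
      (Equiv.arrowCongr (Fin.consEquiv fun _ => ι).symm (Equiv.refl M)).trans (Equiv.curry _ _ _)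
    have hcomp : sumSMul (M := M) (wordProd a (s := s + 1)) =
        sumSMul a ∘ Pi.map (fun _ => sumSMul (wordProd a)) ∘ uncurry := by
      funext c
      exact sumSMul_wordProd_succ a s c
    rw [hcomp]
    exact h.comp ((Function.Bijective.piMap fun _ => ih).comp uncurry.bijective)

end Decomposition

lemma pow_mul_map_mul_mul_map {K R : Type*} [CommSemiring K] [Semiring R] (ι : K →+* R)
    (t : R) (q : ℕ) (hcomm : ∀ a : K, t * ι (a ^ q) = ι a * t) (s : ℕ) (b a : K) :
    t ^ s * ι b * (t * ι a) = t ^ (s + 1) * ι (b ^ q * a) :=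
  calc t ^ s * ι b * (t * ι a) = t ^ s * ((ι b * t) * ι a) := by rw [mul_assoc, mul_assoc]
    _ = t ^ s * ((t * ι (b ^ q)) * ι a) := by rw [hcomm b]
    _ = t ^ (s + 1) * ι (b ^ q * a) := by rw [map_mul, pow_succ, mul_assoc, mul_assoc]

lemma prod_ofFn_op_mul_map {K R : Type*} [CommSemiring K] [Semiring R] (ι : K →+* R)
    (t : R) (q : ℕ) (hcomm : ∀ a : K, t * ι (a ^ q) = ι a * t) (s : ℕ) (v : Fin s → K) :
    (List.ofFn fun j => op (t * ι (v j))).prod = op (t ^ s * ι (∏ j, v j ^ q ^ (j : ℕ))) := by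
  induction s with
  | zero => simp
  | succ s ih =>
    rw [List.ofFn_succ, List.prod_cons, ih, ← op_mul,
      pow_mul_map_mul_mul_map ι t q hcomm, Fin.prod_univ_succ, mul_comm (v 0 ^ _)]
    simp only [Fin.val_zero, pow_zero, pow_one, Fin.val_succ, pow_succ, pow_mul,
      Finset.prod_pow]

theorem stmt_10_general (p k : ℕ)
    {K : Type*} [Field K]
    {R : Type*} [Ring R] (ι : K →+* R) (t : R)
    (hcomm : ∀ a : K, t * ι (a ^ p ^ k) = ι a * t)
    (α : Fin (p ^ k) → K)
    {M : Type*} [AddCommGroup M] [Module Rᵐᵒᵖ M]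
    (hdec : ∀ x : M, ∃! c : Fin (p ^ k) → M,
      x = ∑ i : Fin (p ^ k), MulOpposite.op (t * ι (α i)) • c i)
    (s : ℕ) :
    ∀ x : M, ∃! c : (Fin s → Fin (p ^ k)) → M,
      x = ∑ f : Fin s → Fin (p ^ k),
        MulOpposite.op (t ^ s * ι (∏ j : Fin s, α (f j) ^ (p ^ k) ^ (j : ℕ))) • c f := by
  set a : Fin (p ^ k) → Rᵐᵒᵖ := fun i => op (t * ι (α i))
  have hword (f : Fin s → Fin (p ^ k)) :
      op (t ^ s * ι (∏ j : Fin s, α (f j) ^ (p ^ k) ^ (j : ℕ))) = wordProd a f :=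
    (prod_ofFn_op_mul_map ι t (p ^ k) hcomm s fun j => α (f j)).symm
  have hbij : Function.Bijective (sumSMul (M := M) a) :=
    (Function.bijective_iff_existsUnique _).2 fun x => by
      simpa only [sumSMul, eq_comm (a := x)] using hdec x
  intro x
  simpa only [hword, sumSMul, eq_comm (b := x)] using
    (Function.bijective_iff_existsUnique _).1 (bijective_sumSMul_wordProd hbij s) x

/-- a `t`-decomposable right `R`-module `M` (multiplication by `t` is
injective and `M = ⊕_{i<d} M·t·α_i` as internal direct sum of abelian groups, `α` the
basis `(1, X, ..., X^{d-1})` of `K` over `K^φ`) satisfies, for every `s ≥ 1`,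
`M = ⊕_{i ∈ d^s} M·t^s·α_i` where `i` ranges over the induced basis `α(s)`.
Right `R`-modules are formalized as modules over `Rᵐᵒᵖ`, and internal direct sums by
unique decomposition. -/
theorem stmt_10 (p k : ℕ) (hp : p.Prime) (hk : 1 ≤ k)
    {K : Type*} [Field K] [CharP K p]
    {R : Type*} [Ring R] (ι : K →+* R) (t : R)
    (hcomm : ∀ a : K, t * ι (a ^ p ^ k) = ι a * t)
    (rep : R ≃+ (ℕ →₀ K))
    (hrep : ∀ f : ℕ →₀ K, rep.symm f = f.sum fun n a => t ^ n * ι a)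
    (α : Fin (p ^ k) → K)
    (hbasis : ∀ x : K, ∃! c : Fin (p ^ k) → K,
      x = ∑ j : Fin (p ^ k), (c j) ^ (p ^ k) * α j)
    {M : Type*} [AddCommGroup M] [Module Rᵐᵒᵖ M]
    (hinj : Function.Injective fun x : M => MulOpposite.op t • x)
    (hdec : ∀ x : M, ∃! c : Fin (p ^ k) → M,
      x = ∑ i : Fin (p ^ k), MulOpposite.op (t * ι (α i)) • c i)
    (s : ℕ) (hs : 1 ≤ s) :
    ∀ x : M, ∃! c : (Fin s → Fin (p ^ k)) → M,
      x = ∑ f : Fin s → Fin (p ^ k),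
        MulOpposite.op (t ^ s * ι (∏ j : Fin s, α (f j) ^ (p ^ k) ^ (j : ℕ))) • c f :=
  stmt_10_general p k ι t hcomm α hdec s
end

section
/- The tropical action of R on Γ = ℤ ∪ {∞}, defined for q = Σ_i t^i·a_i by γ·q = min_i (d^i·γ + v(a_i)), satisfies: (1) γ·(r·q) = (γ·r)·q for all r, q ∈ R; (2) γ·(r + q) ≥ min(γ·r, γ·q); (3) the map γ ↦ γ·r is strictly increasing on ℤ for every nonzero r; (4) ∞·r = ∞ and γ·0 = ∞. -/
/-!
Since `ι a * t ^ j = t ^ j * ι (a ^ d ^ j)`, the monomials multiply as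
`(t^i a)(t^j b) = t^(i+j) a^(d^j) b`, and the weight of such a product at `γ` is
`d^(i+j) γ + v(a^(d^j) b) = d^j (d^i γ + v a) + v b`. Hence every monomial of `r q` has
weight at least `(γ·r)·q`. For the reverse inequality take `i₀` least with
`d^i₀ γ + v(a_i₀) = γ·r` and then `j₀` least with `d^j₀ (γ·r) + v(b_j₀) = (γ·r)·q`:
any other pair `(i, j)` with `i + j = i₀ + j₀` has `i < i₀` or `j < j₀`, so its weight is
strictly larger, and the coefficient of `t^(i₀+j₀)` in `r q` has exactly the weight
`(γ·r)·q`.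
-/

/-- The tropical action of `q = Σ_i t^i·a_i ∈ R` on `γ ∈ Γ = ℤ ∪ {∞}`:
`γ·q = min_i (d^i·γ + v(a_i))`, with `γ·0 = ∞`. Here `rep` gives the coefficient
sequence of an element of `R` with respect to the powers of `t`. -/
noncomputable def act {K : Type*} [Field K] {R : Type*} [Ring R]
    (v : K → WithTop ℤ) (rep : R ≃+ (ℕ →₀ K)) (d : ℕ)
    (γ : WithTop ℤ) (r : R) : WithTop ℤ :=
  (rep r).support.inf fun n => WithTop.map (fun g : ℤ => (d : ℤ) ^ n * g) γ + v (rep r n)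

open Finset

theorem Finset.exists_least_mem_eq_inf {α : Type*} [LinearOrder α] [OrderTop α]
    (s : Finset ℕ) (hs : s.Nonempty) (f : ℕ → α) :
    ∃ i ∈ s, s.inf f = f i ∧ ∀ j ∈ s, j < i → s.inf f < f j := by
  classical
  have h : ∃ i, i ∈ s ∧ s.inf f = f i := s.exists_mem_eq_inf hs f
  refine ⟨Nat.find h, (Nat.find_spec h).1, (Nat.find_spec h).2, fun j hj hlt => ?_⟩
  exact lt_of_le_of_ne (inf_le hj) fun heq => Nat.find_min h hlt ⟨hj, heq⟩

namespace WithTop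

variable {α : Type*} [AddMonoid α]

theorem nsmul_top {n : ℕ} (hn : n ≠ 0) : n • (⊤ : WithTop α) = ⊤ := by
  obtain ⟨m, rfl⟩ := Nat.exists_eq_succ_of_ne_zero hn
  rw [succ_nsmul, add_top]

theorem nsmul_lt_nsmul_right [Preorder α] [AddLeftStrictMono α] [AddRightStrictMono α]
    {n : ℕ} (hn : n ≠ 0) {a b : WithTop α} (h : a < b) : n • a < n • b := by
  lift a to α using h.ne_top
  induction b using WithTop.recTopCoe with
  | top => rw [nsmul_top hn, ← coe_nsmul]; exact coe_lt_top _
  | coe b =>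
    rw [← coe_nsmul, ← coe_nsmul, coe_lt_coe]
    exact _root_.nsmul_lt_nsmul_right hn (coe_lt_coe.mp h)

end WithTop

theorem map_one_eq_zero_of_map_mul {K : Type*} [MulOneClass K] (v : K → WithTop ℤ)
    (h1 : v 1 ≠ ⊤) (hvmul : ∀ x y, v (x * y) = v x + v y) : v 1 = 0 := by
  have h := hvmul 1 1
  rw [one_mul] at h
  lift v 1 to ℤ using h1 with a
  norm_cast at h ⊢
  omega

namespace AddValuation

variable {K Γ₀ : Type*} [Ring K] [LinearOrderedAddCommMonoidWithTop Γ₀]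
  (v : AddValuation K Γ₀)

theorem le_add_map_sum {ι : Type*} {s : Finset ι} {f : ι → K} {a c : Γ₀}
    (h : ∀ i ∈ s, c ≤ a + v (f i)) : c ≤ a + v (∑ i ∈ s, f i) := by
  rcases s.eq_empty_or_nonempty with rfl | hs
  · simp
  obtain ⟨i, hi, hinf⟩ := s.exists_mem_eq_inf hs fun i => v (f i)
  calc c ≤ a + v (f i) := h i hi
    _ = a + s.inf fun i => v (f i) := by rw [hinf]
    _ ≤ a + v (∑ i ∈ s, f i) := by gcongr; exact v.map_le_sum fun i hi => inf_le hi

theorem map_sum_eq_of_lt {ι : Type*} [DecidableEq ι] {s : Finset ι} {f : ι → K} {j : ι}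
    (hj : j ∈ s) (hf : ∀ i ∈ s \ {j}, v (f j) < v (f i)) :
    v (∑ i ∈ s, f i) = v (f j) := by
  rw [sum_eq_add_sum_sdiff_singleton_of_mem hj]
  rcases eq_or_ne (v (f j)) ⊤ with htop | htop
  · have hempty : s \ {j} = ∅ :=
      eq_empty_of_forall_notMem fun i hi => not_top_lt (htop ▸ hf i hi)
    rw [hempty, sum_empty, add_zero]
  · exact v.map_add_eq_of_lt_left (v.map_lt_sum htop hf)

theorem pow_add_nsmul_add_map_pow_mul (γ : Γ₀) (a b : K) (d i j : ℕ) :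
    d ^ (i + j) • γ + v (a ^ d ^ j * b) = d ^ j • (d ^ i • γ + v a) + v b := by
  rw [v.map_mul, v.map_pow, nsmul_add, pow_add, mul_nsmul, add_assoc]

end AddValuation

section SkewPolynomial

variable {K R : Type*} [Semiring K] [Semiring R] {ι : K →+* R} {t : R} {d : ℕ}
  {rep : R ≃+ (ℕ →₀ K)}

def IsCoeffEquiv (ι : K →+* R) (t : R) (rep : R ≃+ (ℕ →₀ K)) : Prop :=
  ∀ f : ℕ →₀ K, rep.symm f = f.sum fun n a => t ^ n * ι a

theorem map_mul_pow_eq_pow_mul_map (hcomm : ∀ a : K, t * ι (a ^ d) = ι a * t)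
    (j : ℕ) (a : K) :
    ι a * t ^ j = t ^ j * ι (a ^ d ^ j) := by
  induction j generalizing a with
  | zero => simp
  | succ j ih =>
    rw [pow_succ', ← mul_assoc, ← hcomm, mul_assoc, ih, ← mul_assoc, ← pow_succ',
      ← pow_mul, ← pow_succ']

theorem rep_pow_mul_map (hrep : IsCoeffEquiv ι t rep) (n : ℕ) (c : K) :
    rep (t ^ n * ι c) = Finsupp.single n c := by
  rw [← rep.apply_symm_apply (Finsupp.single n c), hrep, Finsupp.sum_single_index (by simp)]

theorem eq_sum_pow_mul_map (hrep : IsCoeffEquiv ι t rep) (r : R) :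
    r = ∑ i ∈ (rep r).support, t ^ i * ι (rep r i) := by
  conv_lhs => rw [← rep.symm_apply_apply r, hrep]
  rfl

theorem rep_mul_apply (hrep : IsCoeffEquiv ι t rep)
    (hcomm : ∀ a : K, t * ι (a ^ d) = ι a * t) (r q : R) (n : ℕ) :
    rep (r * q) n = ∑ x ∈ (rep r).support ×ˢ (rep q).support with x.1 + x.2 = n,
      rep r x.1 ^ d ^ x.2 * rep q x.2 := by
  classical
  have hmonomial : ∀ (i j : ℕ) (a b : K),
      t ^ i * ι a * (t ^ j * ι b) = t ^ (i + j) * ι (a ^ d ^ j * b) := fun i j a b => by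
    rw [mul_assoc, ← mul_assoc (ι a), map_mul_pow_eq_pow_mul_map hcomm, map_mul, pow_add]
    simp only [mul_assoc]
  have hprod : r * q = ∑ x ∈ (rep r).support ×ˢ (rep q).support,
      t ^ (x.1 + x.2) * ι (rep r x.1 ^ d ^ x.2 * rep q x.2) := by
    conv_lhs => rw [eq_sum_pow_mul_map hrep r, eq_sum_pow_mul_map hrep q]
    simp only [sum_mul_sum, sum_product, hmonomial]
  rw [hprod, map_sum, Finsupp.finsetSum_apply, sum_filter]
  simp only [rep_pow_mul_map hrep, Finsupp.single_apply]

end SkewPolynomial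

section TropicalAction

variable {K R : Type*} [Field K] [Ring R] {rep : R ≃+ (ℕ →₀ K)} {d : ℕ}
  {ι : K →+* R} {t : R}

theorem act_top (v : K → WithTop ℤ) (r : R) : act v rep d ⊤ r = ⊤ := by
  simp [act]

theorem act_zero (v : K → WithTop ℤ) (γ : WithTop ℤ) : act v rep d γ 0 = ⊤ := by
  simp [act]

theorem act_eq_inf (v : K → WithTop ℤ) (hd : d ≠ 0) (γ : WithTop ℤ) (r : R) :
    act v rep d γ r = (rep r).support.inf fun n => d ^ n • γ + v (rep r n) := by
  refine inf_congr rfl fun n _ => ?_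
  induction γ using WithTop.recTopCoe with
  | top => rw [WithTop.map_top, WithTop.nsmul_top (pow_ne_zero n hd)]
  | coe g => rw [WithTop.map_coe, ← WithTop.coe_nsmul, nsmul_eq_mul, Nat.cast_pow]

theorem act_le (v : AddValuation K (WithTop ℤ)) (hd : d ≠ 0) (γ : WithTop ℤ) (r : R)
    (n : ℕ) :
    act v rep d γ r ≤ d ^ n • γ + v (rep r n) := by
  by_cases hn : n ∈ (rep r).support
  · rw [act_eq_inf v hd]
    exact inf_le (f := fun n => d ^ n • γ + v (rep r n)) hn
  · rw [Finsupp.notMem_support_iff.mp hn, v.map_zero, add_top]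
    exact le_top

theorem le_act (v : K → WithTop ℤ) (hd : d ≠ 0) {c γ : WithTop ℤ} {r : R}
    (h : ∀ n, c ≤ d ^ n • γ + v (rep r n)) : c ≤ act v rep d γ r := by
  rw [act_eq_inf v hd]
  exact Finset.le_inf fun n _ => h n

theorem exists_act_eq (v : AddValuation K (WithTop ℤ)) (hd : d ≠ 0) (γ : WithTop ℤ) {r : R}
    (hr : r ≠ 0) :
    ∃ n ∈ (rep r).support, act v rep d γ r = d ^ n • γ + v (rep r n) ∧
      ∀ m ∈ (rep r).support, m < n → act v rep d γ r < d ^ m • γ + v (rep r m) := by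
  rw [act_eq_inf v hd]
  exact exists_least_mem_eq_inf _
    (Finsupp.support_nonempty_iff.mpr (rep.map_ne_zero_iff.mpr hr)) _

theorem min_act_le_act_add (v : AddValuation K (WithTop ℤ)) (hd : d ≠ 0) (γ : WithTop ℤ)
    (r q : R) :
    min (act v rep d γ r) (act v rep d γ q) ≤ act v rep d γ (r + q) :=
  le_act v hd fun n =>
    calc min (act v rep d γ r) (act v rep d γ q)
        ≤ min (d ^ n • γ + v (rep r n)) (d ^ n • γ + v (rep q n)) :=
          min_le_min (act_le v hd γ r n) (act_le v hd γ q n)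
      _ = d ^ n • γ + min (v (rep r n)) (v (rep q n)) := min_add_add_left _ _ _
      _ ≤ d ^ n • γ + v (rep (r + q) n) := by
          rw [map_add, Finsupp.add_apply]; gcongr; exact v.map_add _ _

theorem act_coe_strictMono (v : AddValuation K (WithTop ℤ)) (hd : d ≠ 0) {r : R}
    (hr : r ≠ 0) :
    StrictMono fun g : ℤ => act v rep d g r := by
  intro g h hgh
  obtain ⟨n, hn, hact, -⟩ := exists_act_eq v hd h hr
  have hvn : v (rep r n) ≠ ⊤ := v.ne_top_iff.mpr (Finsupp.mem_support_iff.mp hn)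
  calc act v rep d g r ≤ d ^ n • (g : WithTop ℤ) + v (rep r n) := act_le v hd _ r n
    _ < d ^ n • (h : WithTop ℤ) + v (rep r n) :=
        WithTop.add_lt_add_right hvn
          (WithTop.nsmul_lt_nsmul_right (pow_ne_zero n hd) (WithTop.coe_lt_coe.mpr hgh))
    _ = act v rep d h r := hact.symm

theorem act_act_le_act_mul (v : AddValuation K (WithTop ℤ)) (hd : d ≠ 0)
    (hrep : IsCoeffEquiv ι t rep) (hcomm : ∀ a : K, t * ι (a ^ d) = ι a * t) (γ : WithTop ℤ)
    (r q : R) : act v rep d (act v rep d γ r) q ≤ act v rep d γ (r * q) := by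
  refine le_act v hd fun n => ?_
  rw [rep_mul_apply hrep hcomm]
  refine v.le_add_map_sum fun x hx => ?_
  obtain ⟨hx, rfl⟩ := mem_filter.mp hx
  rw [v.pow_add_nsmul_add_map_pow_mul]
  calc act v rep d (act v rep d γ r) q ≤ d ^ x.2 • act v rep d γ r + v (rep q x.2) :=
        act_le v hd _ q x.2
    _ ≤ d ^ x.2 • (d ^ x.1 • γ + v (rep r x.1)) + v (rep q x.2) := by
        gcongr; exact act_le v hd γ r x.1

theorem act_mul_le_act_act (v : AddValuation K (WithTop ℤ)) (hd : d ≠ 0)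
    (hrep : IsCoeffEquiv ι t rep) (hcomm : ∀ a : K, t * ι (a ^ d) = ι a * t) (γ : WithTop ℤ)
    {r q : R} (hr : r ≠ 0) (hq : q ≠ 0) :
    act v rep d γ (r * q) ≤ act v rep d (act v rep d γ r) q := by
  classical
  set γ' := act v rep d γ r
  obtain ⟨i₀, hi₀, hγ', hi₀_least⟩ := exists_act_eq (rep := rep) v hd γ hr
  obtain ⟨j₀, hj₀, hγ'q, hj₀_least⟩ := exists_act_eq (rep := rep) v hd γ' hq
  set P := ((rep r).support ×ˢ (rep q).support).filter fun x => x.1 + x.2 = i₀ + j₀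
  have hP₀ : (i₀, j₀) ∈ P := mem_filter.mpr ⟨mem_product.mpr ⟨hi₀, hj₀⟩, rfl⟩
  have hterm : ∀ x ∈ P, d ^ (i₀ + j₀) • γ + v (rep r x.1 ^ d ^ x.2 * rep q x.2) =
      d ^ x.2 • (d ^ x.1 • γ + v (rep r x.1)) + v (rep q x.2) := fun x hx => by
    rw [← (mem_filter.mp hx).2, v.pow_add_nsmul_add_map_pow_mul]
  have hunique : ∀ x ∈ P \ {(i₀, j₀)},
      v (rep r i₀ ^ d ^ j₀ * rep q j₀) < v (rep r x.1 ^ d ^ x.2 * rep q x.2) := by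
    rintro ⟨i, j⟩ hx
    obtain ⟨hx, hne⟩ := mem_sdiff.mp hx
    obtain ⟨hij, hsum : i + j = i₀ + j₀⟩ := mem_filter.mp hx
    obtain ⟨hi, hj⟩ := mem_product.mp hij
    refine lt_of_add_lt_add_left (a := d ^ (i₀ + j₀) • γ) ?_
    rw [hterm _ hP₀, hterm _ hx, ← hγ', ← hγ'q]
    rcases lt_or_ge i i₀ with hlt | hge
    · calc act v rep d γ' q ≤ d ^ j • γ' + v (rep q j) := act_le v hd γ' q j
        _ < d ^ j • (d ^ i • γ + v (rep r i)) + v (rep q j) :=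
          WithTop.add_lt_add_right (v.ne_top_iff.mpr (Finsupp.mem_support_iff.mp hj))
            (WithTop.nsmul_lt_nsmul_right (pow_ne_zero j hd) (hi₀_least i hi hlt))
    · have hlt : j < j₀ := by
        by_contra! hge'
        exact hne (by rw [mem_singleton, Prod.mk.injEq]; omega)
      calc act v rep d γ' q < d ^ j • γ' + v (rep q j) := hj₀_least j hj hlt
        _ ≤ d ^ j • (d ^ i • γ + v (rep r i)) + v (rep q j) := by
          gcongr; exact act_le v hd γ r i
  calc act v rep d γ (r * q) ≤ d ^ (i₀ + j₀) • γ + v (rep (r * q) (i₀ + j₀)) :=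
        act_le v hd γ _ _
    _ = d ^ (i₀ + j₀) • γ + v (rep r i₀ ^ d ^ j₀ * rep q j₀) := by
        rw [rep_mul_apply hrep hcomm, v.map_sum_eq_of_lt hP₀ hunique]
    _ = act v rep d γ' q := by rw [hterm _ hP₀, ← hγ', hγ'q]

theorem act_mul (v : AddValuation K (WithTop ℤ)) (hd : d ≠ 0)
    (hrep : IsCoeffEquiv ι t rep) (hcomm : ∀ a : K, t * ι (a ^ d) = ι a * t) (γ : WithTop ℤ)
    (r q : R) :
    act v rep d γ (r * q) = act v rep d (act v rep d γ r) q := by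
  rcases eq_or_ne r 0 with rfl | hr
  · rw [zero_mul, act_zero, act_top]
  rcases eq_or_ne q 0 with rfl | hq
  · rw [mul_zero, act_zero, act_zero]
  exact (act_mul_le_act_act v hd hrep hcomm γ hr hq).antisymm
    (act_act_le_act_mul v hd hrep hcomm γ r q)

end TropicalAction

theorem stmt_12_general (p k : ℕ) (hp : p.Prime)
    {K : Type*} [Field K]
    (v : K → WithTop ℤ)
    (hv0 : ∀ x, v x = ⊤ ↔ x = 0)
    (hvmul : ∀ x y, v (x * y) = v x + v y)
    (hvadd : ∀ x y, min (v x) (v y) ≤ v (x + y))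
    {R : Type*} [Ring R] (ι : K →+* R) (t : R)
    (hcomm : ∀ a : K, t * ι (a ^ p ^ k) = ι a * t)
    (rep : R ≃+ (ℕ →₀ K))
    (hrep : ∀ f : ℕ →₀ K, rep.symm f = f.sum fun n a => t ^ n * ι a)
    (d : ℕ) (hd : d = p ^ k) :
    (∀ (γ : WithTop ℤ) (r q : R),
        act v rep d γ (r * q) = act v rep d (act v rep d γ r) q) ∧
    (∀ (γ : WithTop ℤ) (r q : R),
        min (act v rep d γ r) (act v rep d γ q) ≤ act v rep d γ (r + q)) ∧
    (∀ r : R, r ≠ 0 → ∀ γ δ : ℤ, γ < δ →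
        act v rep d (γ : WithTop ℤ) r < act v rep d (δ : WithTop ℤ) r) ∧
    (∀ r : R, act v rep d ⊤ r = ⊤) ∧ (∀ γ : WithTop ℤ, act v rep d γ 0 = ⊤) := by
  subst hd
  have hv1 : v 1 = 0 :=
    map_one_eq_zero_of_map_mul v (fun h => one_ne_zero ((hv0 1).mp h)) hvmul
  obtain ⟨w, rfl⟩ : ∃ w : AddValuation K (WithTop ℤ), ⇑w = v :=
    ⟨AddValuation.of v ((hv0 0).mpr rfl) hv1 hvadd hvmul, rfl⟩
  have hd : p ^ k ≠ 0 := pow_ne_zero k hp.ne_zero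
  exact ⟨act_mul w hd hrep hcomm, min_act_le_act_add w hd,
    fun r hr _ _ hγδ => act_coe_strictMono w hd hr hγδ, act_top w, act_zero w⟩

/-- the tropical action of `R` on `Γ = ℤ ∪ {∞}` satisfies:
(1) `γ·(r·q) = (γ·r)·q`; (2) `γ·(r + q) ≥ min(γ·r, γ·q)`; (3) `γ ↦ γ·r` is strictly
increasing on `ℤ` for every nonzero `r`; (4) `∞·r = ∞` and `γ·0 = ∞`. -/
theorem stmt_12 (p k : ℕ) (hp : p.Prime) (hk : 1 ≤ k)
    {K : Type*} [Field K] [CharP K p]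
    (v : K → WithTop ℤ)
    (hv0 : ∀ x, v x = ⊤ ↔ x = 0)
    (hvmul : ∀ x y, v (x * y) = v x + v y)
    (hvadd : ∀ x y, min (v x) (v y) ≤ v (x + y))
    (hvsurj : Function.Surjective v)
    {R : Type*} [Ring R] (ι : K →+* R) (t : R)
    (hcomm : ∀ a : K, t * ι (a ^ p ^ k) = ι a * t)
    (rep : R ≃+ (ℕ →₀ K))
    (hrep : ∀ f : ℕ →₀ K, rep.symm f = f.sum fun n a => t ^ n * ι a)
    (d : ℕ) (hd : d = p ^ k) :
    (∀ (γ : WithTop ℤ) (r q : R),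
        act v rep d γ (r * q) = act v rep d (act v rep d γ r) q) ∧
    (∀ (γ : WithTop ℤ) (r q : R),
        min (act v rep d γ r) (act v rep d γ q) ≤ act v rep d γ (r + q)) ∧
    (∀ r : R, r ≠ 0 → ∀ γ δ : ℤ, γ < δ →
        act v rep d (γ : WithTop ℤ) r < act v rep d (δ : WithTop ℤ) r) ∧
    (∀ r : R, act v rep d ⊤ r = ⊤) ∧ (∀ γ : WithTop ℤ, act v rep d γ 0 = ⊤) :=
  stmt_12_general p k hp v hv0 hvmul hvadd ι t hcomm rep hrep d hd
end

section
/- Let M be an abelian group with an ultrametric valuation-like structure, and let A, B be subgroups with B ⊆ A such that A and B are m-immediate (rv(A \ P_γ) = rv(B \ P_γ) for some γ, where rv denotes the class of the equivalence x RV y ⟺ v(x) = v(y) < v(x−y) and P_γ is the closed ball of radius γ around 0). Then A + P_γ = B + P_γ. -/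
/-!
Every `a ∈ A` lies in `B + P_γ`: while `v a < γ`, m-immediacy gives `b ∈ B` with
`v (a - b) > v a`, and we continue with `a - b ∈ A`. Since values are integers, each step
raises the value by at least one, so after at most `γ - v a` steps the remainder lies in
`P_γ`. Then `A + P_γ ⊆ B + P_γ + P_γ = B + P_γ` because the ultrametric inequality makes
`P_γ` closed under addition.
-/

open Pointwise

/-- The closed ball `P_γ` of the paper. -/
def valBall {M : Type*} (v : M → WithTop ℤ) (γ : WithTop ℤ) : Set M := {x | γ ≤ v x}

theorem WithTop.coe_le_of_coe_sub_one_lt {n : ℤ} {x : WithTop ℤ}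
    (h : ((n - 1 : ℤ) : WithTop ℤ) < x) : (n : WithTop ℤ) ≤ x := by
  induction x with
  | top => exact le_top
  | coe m => exact WithTop.coe_le_coe.2 (Int.sub_one_lt_iff.1 (WithTop.coe_lt_coe.1 h))

section

variable {M : Type*} [AddCommGroup M] (v : M → WithTop ℤ)

theorem valBall_add_valBall_subset (hvadd : ∀ x y, min (v x) (v y) ≤ v (x + y))
    (γ : WithTop ℤ) : valBall v γ + valBall v γ ⊆ valBall v γ := by
  rintro _ ⟨x, hx, y, hy, rfl⟩
  exact (le_min hx hy).trans (hvadd x y)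

theorem subset_add_valBall_of_approx {A B : AddSubgroup M} (hBA : B ≤ A) {γ : ℤ}
    (happrox : ∀ a ∈ A, v a < γ → ∃ b ∈ B, v a < v (a - b)) :
    (A : Set M) ⊆ B + valBall v γ := by
  have ball_subset : ∀ a, (γ : WithTop ℤ) ≤ v a → a ∈ (B : Set M) + valBall v γ :=
    fun a hγa => ⟨0, B.zero_mem, a, hγa, zero_add a⟩
  have descend :
      ∀ n ≤ γ, ∀ a ∈ A, (n : WithTop ℤ) ≤ v a → a ∈ (B : Set M) + valBall v γ := by
    intro n hn
    induction n, hn using Int.leInductionDown with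
    | base => exact fun a _ => ball_subset a
    | pred n _ ih =>
      intro a ha hna
      by_cases hγa : (γ : WithTop ℤ) ≤ v a
      · exact ball_subset a hγa
      obtain ⟨b, hb, hab⟩ := happrox a ha (not_le.1 hγa)
      obtain ⟨b', hb', p, hp, hsum⟩ := ih (a - b) (A.sub_mem ha (hBA hb))
        (WithTop.coe_le_of_coe_sub_one_lt (hna.trans_lt hab))
      exact ⟨b + b', B.add_mem hb hb', p, hp,
        (add_assoc b b' p).trans (eq_sub_iff_add_eq'.1 hsum)⟩
  intro a ha
  by_cases hγa : (γ : WithTop ℤ) ≤ v a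
  · exact ball_subset a hγa
  obtain ⟨m, hm, hmγ⟩ := WithTop.lt_iff_exists_coe.1 (not_le.1 hγa)
  exact descend m (WithTop.coe_lt_coe.1 hmγ).le a ha hm.ge

end

theorem stmt_14_general {M : Type*} [AddCommGroup M] (v : M → WithTop ℤ)
    (hvadd : ∀ x y, min (v x) (v y) ≤ v (x + y))
    (A B : AddSubgroup M) (hBA : B ≤ A) (γ : ℤ)
    (h1 : ∀ a ∈ A, v a < (γ : WithTop ℤ) → ∃ b ∈ B, v b = v a ∧ v a < v (a - b)) :
    (A : Set M) + {x : M | (γ : WithTop ℤ) ≤ v x} =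
      (B : Set M) + {x : M | (γ : WithTop ℤ) ≤ v x} := by
  have hA : (A : Set M) ⊆ B + valBall v γ :=
    subset_add_valBall_of_approx v hBA fun a ha hγa =>
      let ⟨b, hb, _, hab⟩ := h1 a ha hγa
      ⟨b, hb, hab⟩
  refine (Set.add_subset_add_right hBA).antisymm' ?_
  calc (A : Set M) + valBall v γ ⊆ B + valBall v γ + valBall v γ := Set.add_subset_add_right hA
    _ = B + (valBall v γ + valBall v γ) := add_assoc _ _ _
    _ ⊆ B + valBall v γ := Set.add_subset_add_left (valBall_add_valBall_subset v hvadd γ)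

/-- in a valued abelian group `(M, v)` with value set `ℤ ∪ {∞}`, if `B ⊆ A`
are subgroups with `rv(A \ P_γ) = rv(B \ P_γ)` (m-immediate at `γ`, where `x RV y` iff
`v(x) = v(y) < v(x − y)` and `P_γ` is the closed ball of radius `γ` around `0`), then
`A + P_γ = B + P_γ`. -/
theorem stmt_14 {M : Type*} [AddCommGroup M] (v : M → WithTop ℤ)
    (hv0 : ∀ x, v x = ⊤ ↔ x = 0)
    (hvadd : ∀ x y, min (v x) (v y) ≤ v (x + y))
    (hvneg : ∀ x, v (-x) = v x)
    (A B : AddSubgroup M) (hBA : B ≤ A) (γ : ℤ)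
    (h1 : ∀ a ∈ A, v a < (γ : WithTop ℤ) → ∃ b ∈ B, v b = v a ∧ v a < v (a - b))
    (h2 : ∀ b ∈ B, v b < (γ : WithTop ℤ) → ∃ a ∈ A, v a = v b ∧ v b < v (b - a)) :
    (A : Set M) + {x : M | (γ : WithTop ℤ) ≤ v x} =
      (B : Set M) + {x : M | (γ : WithTop ℤ) ≤ v x} :=
  stmt_14_general v hvadd A B hBA γ h1
end

section
/- Let (M, v) be a valued module and A, A', B, B' subgroups with A ≈ A', B ≈ B', and A ∥ B (pseudo-orthogonal). Then A' ∥ B', and every pseudo-complement of A + B is a pseudo-complement of A' + B'. -/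
/-!
Pseudo-orthogonality passes to m-immediate subgroups, since below the bound the values occurring in
`A` and `A'` are the same. Below the bound of `A ∥ B` one has `v (a + b) = min (v a) (v b)`, so the
rv-class of `a + b` is that of `a` or of `b`, whence `A + B ≈ A' + B'`.

For `S ≈ S'` and a pseudo-complement `C` of `S`, density of `S' + C + P_γ` is proved by successive
approximation: in `x = s + c + p` replace `s` by an rv-equivalent `s' ∈ S'` and decompose `s - s' + p`
again; because `S ∥ C` forbids cancellation, the new `S`-component has value strictly larger than
`v s`, and as values lie in `ℤ` the bound is reached after finitely many steps.
-/

/-- Subgroups `A`, `B` are m-immediate (`A ≈ B`): for some `γ`, the nonzero `rv`-classes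
of elements of value `< γ` of `A` and of `B` coincide (`x RV y` iff
`v(x) = v(y) < v(x − y)`). -/
def MImm {M : Type*} [AddCommGroup M] (v : M → WithTop ℤ) (A B : AddSubgroup M) : Prop :=
  ∃ γ : ℤ, (∀ a ∈ A, v a < (γ : WithTop ℤ) → ∃ b ∈ B, v b = v a ∧ v a < v (a - b)) ∧
    (∀ b ∈ B, v b < (γ : WithTop ℤ) → ∃ a ∈ A, v a = v b ∧ v b < v (b - a))

/-- Subgroups `A`, `B` are pseudo-orthogonal (`A ∥ B`): `vA ∩ vB` is contained in a final
segment `[γ, ∞]`. -/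
def POrth {M : Type*} [AddCommGroup M] (v : M → WithTop ℤ) (A B : AddSubgroup M) : Prop :=
  ∃ γ : ℤ, ∀ a ∈ A, ∀ b ∈ B, v a = v b → (γ : WithTop ℤ) ≤ v a

/-- `C` is a pseudo-complement of `A`: `M = A + C + P_γ` for some `γ`, and `A ∥ C`. -/
def PComp {M : Type*} [AddCommGroup M] (v : M → WithTop ℤ) (A C : AddSubgroup M) : Prop :=
  (∃ γ : ℤ, ∀ x : M, ∃ a ∈ A, ∃ c ∈ C, (γ : WithTop ℤ) ≤ v (x - a - c)) ∧ POrth v A C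

section Ultrametric

variable {M : Type*} [AddCommGroup M] {v : M → WithTop ℤ}

lemma min_le_v_sub (hvadd : ∀ x y, min (v x) (v y) ≤ v (x + y)) (hvneg : ∀ x, v (-x) = v x)
    (x y : M) : min (v x) (v y) ≤ v (x - y) := by
  simpa [sub_eq_add_neg, hvneg] using hvadd x (-y)

lemma v_add_eq_left_of_lt (hvadd : ∀ x y, min (v x) (v y) ≤ v (x + y))
    (hvneg : ∀ x, v (-x) = v x) {x y : M} (h : v x < v y) : v (x + y) = v x := by
  refine le_antisymm ?_ (min_eq_left h.le ▸ hvadd x y)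
  by_contra! hlt
  have := min_le_v_sub hvadd hvneg (x + y) y
  rw [add_sub_cancel_right] at this
  exact this.not_gt (lt_min hlt h)

lemma v_add_le_left_of_ne (hvadd : ∀ x y, min (v x) (v y) ≤ v (x + y))
    (hvneg : ∀ x, v (-x) = v x) {x y : M} (h : v x ≠ v y) : v (x + y) ≤ v x := by
  rcases h.lt_or_gt with h | h
  · exact (v_add_eq_left_of_lt hvadd hvneg h).le
  · rw [add_comm, v_add_eq_left_of_lt hvadd hvneg h]
    exact h.le

end Ultrametric

lemma WithTop.coe_add_one_le_of_lt {k : ℤ} {y : WithTop ℤ} (h : (k : WithTop ℤ) < y) :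
    ((k + 1 : ℤ) : WithTop ℤ) ≤ y := by
  induction y with
  | top => exact le_top
  | coe m => exact_mod_cast Int.add_one_le_of_lt (by exact_mod_cast h)

section Subgroups

variable {M : Type*} [AddCommGroup M] {v : M → WithTop ℤ} {A A' B B' : AddSubgroup M}

lemma MImm.symm (h : MImm v A A') : MImm v A' A :=
  let ⟨γ, hA, hA'⟩ := h
  ⟨γ, hA', hA⟩

lemma POrth.symm (h : POrth v A B) : POrth v B A :=
  let ⟨γ, hγ⟩ := h
  ⟨γ, fun b hb a ha hba => hba ▸ hγ a ha b hb hba.symm⟩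

lemma POrth.of_mimm_left (hA : MImm v A A') (h : POrth v A B) : POrth v A' B := by
  obtain ⟨γA, -, hA'⟩ := hA
  obtain ⟨γ, hγ⟩ := h
  refine ⟨min γA γ, fun a' ha' b hb hab => ?_⟩
  by_contra! hlt
  rw [WithTop.coe_min, lt_min_iff] at hlt
  obtain ⟨a, ha, hva, -⟩ := hA' a' ha' hlt.1
  exact (hγ a ha b hb (hva.trans hab)).not_gt (hva ▸ hlt.2)

lemma POrth.of_mimm (hA : MImm v A A') (hB : MImm v B B') (h : POrth v A B) :
    POrth v A' B' :=
  ((h.of_mimm_left hA).symm.of_mimm_left hB).symm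

lemma rv_add_of_lt (hvadd : ∀ x y, min (v x) (v y) ≤ v (x + y)) (hvneg : ∀ x, v (-x) = v x)
    {a a' b : M} (hab : v a < v b) (hva' : v a' = v a) (hrv : v a < v (a - a')) :
    v a' = v (a + b) ∧ v (a + b) < v (a + b - a') := by
  have hvs : v (a + b) = v a := v_add_eq_left_of_lt hvadd hvneg hab
  refine ⟨hva'.trans hvs.symm, hvs ▸ ?_⟩
  calc v a < min (v (a - a')) (v b) := lt_min hrv hab
    _ ≤ v (a - a' + b) := hvadd _ _
    _ = v (a + b - a') := by rw [sub_add_eq_add_sub]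

lemma exists_rv_sup_of_mimm (hvadd : ∀ x y, min (v x) (v y) ≤ v (x + y))
    (hvneg : ∀ x, v (-x) = v x) (hA : MImm v A A') (hB : MImm v B B') (h : POrth v A B) :
    ∃ γ : ℤ, ∀ s ∈ A ⊔ B, v s < γ → ∃ s' ∈ A' ⊔ B', v s' = v s ∧ v s < v (s - s') := by
  obtain ⟨γA, hA, -⟩ := hA
  obtain ⟨γB, hB, -⟩ := hB
  obtain ⟨γ, hγ⟩ := h
  refine ⟨min γ (min γA γB), fun s hs hlt => ?_⟩
  simp only [WithTop.coe_min, lt_min_iff] at hlt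
  obtain ⟨a, ha, b, hb, rfl⟩ := AddSubgroup.mem_sup.1 hs
  rcases lt_trichotomy (v a) (v b) with hab | hab | hab
  · obtain ⟨a', ha', hrv⟩ :=
      hA a ha ((v_add_eq_left_of_lt hvadd hvneg hab).symm ▸ hlt.2.1)
    exact ⟨a', AddSubgroup.mem_sup_left ha', rv_add_of_lt hvadd hvneg hab hrv.1 hrv.2⟩
  · have hle : v a ≤ v (a + b) := by simpa [← hab] using hvadd a b
    exact absurd hlt.1 ((hγ a ha b hb hab).trans hle).not_gt
  · rw [add_comm] at hlt ⊢
    obtain ⟨b', hb', hrv⟩ :=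
      hB b hb ((v_add_eq_left_of_lt hvadd hvneg hab).symm ▸ hlt.2.2)
    exact ⟨b', AddSubgroup.mem_sup_right hb', rv_add_of_lt hvadd hvneg hab hrv.1 hrv.2⟩

lemma MImm.sup (hvadd : ∀ x y, min (v x) (v y) ≤ v (x + y)) (hvneg : ∀ x, v (-x) = v x)
    (hA : MImm v A A') (hB : MImm v B B') (h : POrth v A B) : MImm v (A ⊔ B) (A' ⊔ B') := by
  obtain ⟨γ, hγ⟩ := exists_rv_sup_of_mimm hvadd hvneg hA hB h
  obtain ⟨γ', hγ'⟩ := exists_rv_sup_of_mimm hvadd hvneg hA.symm hB.symm (h.of_mimm hA hB)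
  refine ⟨min γ γ', fun s hs hlt => hγ s hs ?_, fun s hs hlt => hγ' s hs ?_⟩ <;>
    simp_all only [WithTop.coe_min, lt_min_iff]

end Subgroups

section Density

variable {M : Type*} [AddCommGroup M] {v : M → WithTop ℤ}

/-- `x ∈ T + P_Δ`. -/
def ApproxBy (v : M → WithTop ℤ) (T : AddSubgroup M) (Δ : WithTop ℤ) (x : M) : Prop :=
  ∃ t ∈ T, Δ ≤ v (x - t)

variable {S S' C T : AddSubgroup M} {Δ : WithTop ℤ}

lemma ApproxBy.of_le {x : M} (h : Δ ≤ v x) : ApproxBy v T Δ x :=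
  ⟨0, T.zero_mem, by rwa [sub_zero]⟩

lemma ApproxBy.of_sub (hvadd : ∀ x y, min (v x) (v y) ≤ v (x + y)) {x y u : M}
    (hy : ApproxBy v T Δ y) (hu : u ∈ T) (hxy : Δ ≤ v (x - y - u)) : ApproxBy v T Δ x := by
  obtain ⟨t, ht, hyt⟩ := hy
  refine ⟨t + u, add_mem ht hu, ?_⟩
  calc Δ ≤ min (v (y - t)) (v (x - y - u)) := le_min hyt hxy
    _ ≤ v (y - t + (x - y - u)) := hvadd _ _
    _ = v (x - (t + u)) := by abel_nf

lemma approxBy_sup_iff {x : M} :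
    ApproxBy v (S ⊔ C) Δ x ↔ ∃ s ∈ S, ∃ c ∈ C, Δ ≤ v (x - s - c) := by
  simp only [ApproxBy, AddSubgroup.mem_sup]
  constructor
  · rintro ⟨_, ⟨s, hs, c, hc, rfl⟩, h⟩
    exact ⟨s, hs, c, hc, by rwa [sub_sub]⟩
  · rintro ⟨s, hs, c, hc, h⟩
    exact ⟨s + c, ⟨s, hs, c, hc, rfl⟩, by rwa [← sub_sub]⟩

variable {γ δ : ℤ}

lemma exists_rv_improvement (hvadd : ∀ x y, min (v x) (v y) ≤ v (x + y))
    (hvneg : ∀ x, v (-x) = v x)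
    (hrv : ∀ s ∈ S, v s < γ → ∃ s' ∈ S', v s' = v s ∧ v s < v (s - s'))
    (hdense : ∀ x, ∃ s ∈ S, ∃ c ∈ C, (δ : WithTop ℤ) ≤ v (x - s - c))
    (horth : ∀ s ∈ S, ∀ c ∈ C, v s = v c → (γ : WithTop ℤ) ≤ v s)
    {s : M} (hs : s ∈ S) (hlt : v s < (min γ δ : ℤ)) :
    ∃ s₁ ∈ S, v s < v s₁ ∧ ∃ t ∈ S' ⊔ C, ((min γ δ : ℤ) : WithTop ℤ) ≤ v (s - s₁ - t) := by
  rw [WithTop.coe_min, lt_min_iff] at hlt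
  obtain ⟨s', hs', -, hrv⟩ := hrv s hs hlt.1
  obtain ⟨s₁, hs₁, c₁, hc₁, hp⟩ := hdense (s - s')
  have hsum : v s < v (s₁ + c₁) :=
    calc v s < min (v (s - s')) (v (s - s' - s₁ - c₁)) := lt_min hrv (hlt.2.trans_le hp)
      _ ≤ v (s - s' - (s - s' - s₁ - c₁)) := min_le_v_sub hvadd hvneg _ _
      _ = v (s₁ + c₁) := by abel_nf
  -- An `S`-component of value `≤ v s` would have to cancel against `c₁`, which `S ∥ C` forbids.
  have hlt₁ : v s < v s₁ := by
    by_contra! hle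
    have hne : v s₁ ≠ v c₁ := fun heq => (horth s₁ hs₁ c₁ hc₁ heq).not_gt (hle.trans_lt hlt.1)
    exact ((v_add_le_left_of_ne hvadd hvneg hne).trans hle).not_gt hsum
  refine ⟨s₁, hs₁, hlt₁, s' + c₁, add_mem (AddSubgroup.mem_sup_left hs')
    (AddSubgroup.mem_sup_right hc₁), ?_⟩
  calc ((min γ δ : ℤ) : WithTop ℤ) ≤ δ := WithTop.coe_le_coe.2 (min_le_right _ _)
    _ ≤ v (s - s' - s₁ - c₁) := hp
    _ = v (s - s₁ - (s' + c₁)) := by abel_nf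

lemma approxBy_of_mem (hvadd : ∀ x y, min (v x) (v y) ≤ v (x + y))
    (hvneg : ∀ x, v (-x) = v x)
    (hrv : ∀ s ∈ S, v s < γ → ∃ s' ∈ S', v s' = v s ∧ v s < v (s - s'))
    (hdense : ∀ x, ∃ s ∈ S, ∃ c ∈ C, (δ : WithTop ℤ) ≤ v (x - s - c))
    (horth : ∀ s ∈ S, ∀ c ∈ C, v s = v c → (γ : WithTop ℤ) ≤ v s)
    {s : M} (hs : s ∈ S) : ApproxBy v (S' ⊔ C) (min γ δ : ℤ) s := by
  suffices key : ∀ n ≤ min γ δ, ∀ s ∈ S, (n : WithTop ℤ) ≤ v s →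
      ApproxBy v (S' ⊔ C) (min γ δ : ℤ) s by
    obtain ⟨n, hn, hle⟩ : ∃ n ≤ min γ δ, (n : WithTop ℤ) ≤ v s := by
      induction v s with
      | top => exact ⟨_, le_rfl, le_top⟩
      | coe m => exact ⟨min m (min γ δ), min_le_right _ _, WithTop.coe_le_coe.2 (min_le_left _ _)⟩
    exact key n hn s hs hle
  intro n hn
  induction n, hn using Int.leInductionDown with
  | base => exact fun s _ h => ApproxBy.of_le h
  | pred n hn ih =>
    intro s hs hle
    rcases le_or_gt (n : WithTop ℤ) (v s) with h | h
    · exact ih s hs h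
    obtain ⟨s₁, hs₁, hlt, t, ht, hst⟩ := exists_rv_improvement hvadd hvneg hrv hdense horth hs
      (h.trans_le (WithTop.coe_le_coe.2 hn))
    have hn₁ : (n : WithTop ℤ) ≤ v s₁ := by
      simpa using WithTop.coe_add_one_le_of_lt (hle.trans_lt hlt)
    exact (ih s₁ hs₁ hn₁).of_sub hvadd ht hst

end Density

lemma PComp.of_mimm {M : Type*} [AddCommGroup M] {v : M → WithTop ℤ} {S S' C : AddSubgroup M}
    (hvadd : ∀ x y, min (v x) (v y) ≤ v (x + y)) (hvneg : ∀ x, v (-x) = v x)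
    (hS : MImm v S S') (hC : PComp v S C) : PComp v S' C := by
  refine ⟨?_, hC.2.of_mimm_left hS⟩
  obtain ⟨γ₁, hrv, -⟩ := hS
  obtain ⟨⟨δ, hdense⟩, γ₂, horth⟩ := hC
  have hγ₁ : ((min γ₁ γ₂ : ℤ) : WithTop ℤ) ≤ γ₁ := WithTop.coe_le_coe.2 (min_le_left _ _)
  have hγ₂ : ((min γ₁ γ₂ : ℤ) : WithTop ℤ) ≤ γ₂ := WithTop.coe_le_coe.2 (min_le_right _ _)
  have hS' := fun s (hs : s ∈ S) => approxBy_of_mem (S' := S') (δ := δ) hvadd hvneg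
    (fun s hs hlt => hrv s hs (hlt.trans_le hγ₁)) hdense
    (fun s hs c hc h => hγ₂.trans (horth s hs c hc h)) hs
  refine ⟨min (min γ₁ γ₂) δ, fun x => approxBy_sup_iff.1 ?_⟩
  obtain ⟨s, hs, c, hc, hp⟩ := hdense x
  exact (hS' s hs).of_sub hvadd (AddSubgroup.mem_sup_right hc)
    ((WithTop.coe_le_coe.2 (min_le_right _ _)).trans hp)

theorem stmt_16_general {M : Type*} [AddCommGroup M] (v : M → WithTop ℤ)
    (hvadd : ∀ x y, min (v x) (v y) ≤ v (x + y))
    (hvneg : ∀ x, v (-x) = v x)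
    (A A' B B' : AddSubgroup M)
    (hA : MImm v A A') (hB : MImm v B B') (hAB : POrth v A B) :
    POrth v A' B' ∧
      ∀ C : AddSubgroup M, PComp v (A ⊔ B) C → PComp v (A' ⊔ B') C :=
  ⟨hAB.of_mimm hA hB, fun _ hC => hC.of_mimm hvadd hvneg (MImm.sup hvadd hvneg hA hB hAB)⟩

/-- in a valued module `(M, v)`, if `A ≈ A'`, `B ≈ B'` and `A ∥ B`, then
`A' ∥ B'` and every pseudo-complement of `A + B` is a pseudo-complement of `A' + B'`. -/
theorem stmt_16 {M : Type*} [AddCommGroup M] (v : M → WithTop ℤ)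
    (hv0 : ∀ x, v x = ⊤ ↔ x = 0)
    (hvadd : ∀ x y, min (v x) (v y) ≤ v (x + y))
    (hvneg : ∀ x, v (-x) = v x)
    (hvsurj : Function.Surjective v)
    (A A' B B' : AddSubgroup M)
    (hA : MImm v A A') (hB : MImm v B B') (hAB : POrth v A B) :
    POrth v A' B' ∧
      ∀ C : AddSubgroup M, PComp v (A ⊔ B) C → PComp v (A' ⊔ B') C :=
  stmt_16_general v hvadd hvneg A A' B B' hA hB hAB
end

section
/- Let (M, v) be a valued module over R and let g_1, ..., g_m ∈ R all have the same degree s, with leading coefficients b_1, ..., b_m ∈ K having pairwise distinct valuations in {0, ..., d^s − 1}. Then for i ≠ j, the subgroups M·g_i and M·g_j are pseudo-orthogonal: v(M·g_i) ∩ v(M·g_j) is contained in a final segment of ℤ ∪ {∞}. -/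
/-- `γ` is a jump value of `r` if the minimum defining `γ·r` is attained twice. -/
def IsJump {K : Type*} [Field K] {R : Type*} [Ring R]
    (v : K → WithTop ℤ) (rep : R ≃+ (ℕ →₀ K)) (d : ℕ)
    (γ : ℤ) (r : R) : Prop :=
  ∃ m₁ ∈ (rep r).support, ∃ m₂ ∈ (rep r).support, m₁ ≠ m₂ ∧
    WithTop.map (fun g : ℤ => (d : ℤ) ^ m₁ * g) (γ : WithTop ℤ) + v (rep r m₁) =
      act v rep d (γ : WithTop ℤ) r ∧
    WithTop.map (fun g : ℤ => (d : ℤ) ^ m₂ * g) (γ : WithTop ℤ) + v (rep r m₂) =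
      act v rep d (γ : WithTop ℤ) r

/-!
For `γ ≪ 0` the leading term of `g` strictly dominates all others in the tropical action, so
`γ` is not a jump value and `v(x·g) = d^s·v(x) + v(b)` once `v(x) ≤ γ₀`. Since `0 ≤ v(b_i) < d^s`,
the residue of `d^s·a + v(b_i)` modulo `d^s` recovers `v(b_i)`, so these values never agree for
`g_i` and `g_j`. If `v(x) > γ₀`, choose `u` with `v(u) = γ₀` and write `x·g = (x - u)·g - (-u)·g`:
both `x - u` and `-u` have value `γ₀`, which bounds `v(x·g)` below by `d^s·γ₀ + v(b)`.
-/

open Filter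

section Ultrametric

variable {G Γ : Type*} [LinearOrder Γ] {f : G → Γ}

section AddGroup

variable [AddGroup G]

theorem le_apply_zero_of_min_le_sub (hsub : ∀ x y, min (f x) (f y) ≤ f (x - y)) (x : G) :
    f x ≤ f 0 := by
  simpa using hsub x x

theorem apply_neg_of_min_le_sub (hsub : ∀ x y, min (f x) (f y) ≤ f (x - y)) (x : G) :
    f (-x) = f x := by
  have hle : ∀ y, f y ≤ f (-y) := fun y => by
    simpa [min_eq_right (le_apply_zero_of_min_le_sub hsub y)] using hsub 0 y
  exact le_antisymm (by simpa using hle (-x)) (hle x)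

end AddGroup

theorem apply_sub_eq_of_lt [AddCommGroup G] (hsub : ∀ x y, min (f x) (f y) ≤ f (x - y)) {x u : G}
    (hu : f u < f x) : f (x - u) = f u := by
  refine le_antisymm ?_ (by simpa [min_eq_right hu.le] using hsub x u)
  by_contra! h
  have := hsub x (x - u)
  rw [sub_sub_cancel] at this
  exact this.not_gt (lt_min hu h)

end Ultrametric

section Tropical

variable {K R : Type*} [Field K] [Ring R]

def LeadingTermDominates (v : K → WithTop ℤ) (rep : R ≃+ (ℕ →₀ K)) (d s : ℕ) (c γ : ℤ) (r : R) :
    Prop :=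
  ∀ l ∈ (rep r).support, l ≠ s →
    (((d : ℤ) ^ s * γ + c : ℤ) : WithTop ℤ) < (((d : ℤ) ^ l * γ : ℤ) : WithTop ℤ) + v (rep r l)

variable {v : K → WithTop ℤ} {rep : R ≃+ (ℕ →₀ K)} {d s : ℕ} {r : R} {c : ℤ}

theorem eventually_leadingTermDominates (hd : 1 < d) (hle : ∀ l ∈ (rep r).support, l ≤ s) :
    ∀ᶠ γ : ℤ in atBot, LeadingTermDominates v rep d s c γ r := by
  refine (rep r).support.eventually_all.2 fun l hl => ?_
  cases hv : v (rep r l) with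
  | top =>
    refine Eventually.of_forall fun γ _ => ?_
    rw [WithTop.add_top]
    exact WithTop.coe_lt_top _
  | coe e =>
    filter_upwards [eventually_lt_atBot (min 0 (e - c))] with γ hγ hls
    have hpow : (d : ℤ) ^ l < (d : ℤ) ^ s :=
      pow_lt_pow_right₀ (by exact_mod_cast hd) (lt_of_le_of_ne (hle l hl) hls)
    have hγ0 : γ < 0 := hγ.trans_le (min_le_left _ _)
    have hγe : γ < e - c := hγ.trans_le (min_le_right _ _)
    rw [← WithTop.coe_add, WithTop.coe_lt_coe]
    nlinarith

variable {γ : ℤ}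

theorem act_eq_of_leadingTermDominates (hs : s ∈ (rep r).support) (hc : v (rep r s) = c)
    (hlt : LeadingTermDominates v rep d s c γ r) :
    act v rep d γ r = (((d : ℤ) ^ s * γ + c : ℤ) : WithTop ℤ) := by
  refine le_antisymm ?_ (Finset.le_inf fun l hl => ?_)
  · refine (Finset.inf_le hs).trans_eq ?_
    rw [WithTop.map_coe, hc, WithTop.coe_add]
  · rcases eq_or_ne l s with rfl | hls
    · rw [WithTop.map_coe, hc, WithTop.coe_add]
    · exact (hlt l hl hls).le

theorem not_isJump_of_leadingTermDominates (hs : s ∈ (rep r).support) (hc : v (rep r s) = c)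
    (hlt : LeadingTermDominates v rep d s c γ r) :
    ¬ IsJump v rep d γ r := by
  rintro ⟨m₁, hm₁, m₂, hm₂, hne, h₁, h₂⟩
  have hattained : ∀ l ∈ (rep r).support,
      WithTop.map (fun g : ℤ => (d : ℤ) ^ l * g) (γ : WithTop ℤ) + v (rep r l) =
        act v rep d γ r → l = s := fun l hl heq => by
    by_contra hls
    rw [act_eq_of_leadingTermDominates hs hc hlt, WithTop.map_coe] at heq
    exact (hlt l hl hls).ne' heq
  exact hne ((hattained m₁ hm₁ h₁).trans (hattained m₂ hm₂ h₂).symm)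

theorem eventually_act_eq_and_not_isJump (hd : 1 < d) (hs : s ∈ (rep r).support)
    (hle : ∀ l ∈ (rep r).support, l ≤ s) (hc : v (rep r s) = c) :
    ∀ᶠ γ : ℤ in atBot, act v rep d γ r = (((d : ℤ) ^ s * γ + c : ℤ) : WithTop ℤ) ∧
      ¬ IsJump v rep d γ r :=
  (eventually_leadingTermDominates hd hle).mono fun _ hlt =>
    ⟨act_eq_of_leadingTermDominates hs hc hlt, not_isJump_of_leadingTermDominates hs hc hlt⟩

end Tropical

section ValuedModule

variable {K R M : Type*} [Field K] [Ring R] [AddCommGroup M] [Module Rᵐᵒᵖ M]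
  {v : K → WithTop ℤ} {rep : R ≃+ (ℕ →₀ K)} {vM : M → WithTop ℤ} {d s : ℕ} {r : R} {c γ₀ : ℤ}

theorem valuation_smul_of_eq
    (hsmul : ∀ (x : M) (r : R), (∀ γ : ℤ, vM x = γ → ¬ IsJump v rep d γ r) →
      vM (MulOpposite.op r • x) = act v rep d (vM x) r)
    (hγ₀ : ∀ γ ≤ γ₀, act v rep d γ r = (((d : ℤ) ^ s * γ + c : ℤ) : WithTop ℤ) ∧
      ¬ IsJump v rep d γ r)
    {x : M} {a : ℤ} (ha : a ≤ γ₀) (hx : vM x = a) :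
    vM (MulOpposite.op r • x) = (((d : ℤ) ^ s * a + c : ℤ) : WithTop ℤ) := by
  rw [hsmul x r fun γ hγ => ?_, hx, (hγ₀ a ha).1]
  obtain rfl : γ = a := WithTop.coe_injective (hγ.symm.trans hx)
  exact (hγ₀ γ ha).2

theorem le_valuation_smul_of_lt (hsub : ∀ x y : M, min (vM x) (vM y) ≤ vM (x - y))
    (hsurj : Function.Surjective vM)
    (hsmul : ∀ (x : M) (r : R), (∀ γ : ℤ, vM x = γ → ¬ IsJump v rep d γ r) →
      vM (MulOpposite.op r • x) = act v rep d (vM x) r)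
    (hγ₀ : ∀ γ ≤ γ₀, act v rep d γ r = (((d : ℤ) ^ s * γ + c : ℤ) : WithTop ℤ) ∧
      ¬ IsJump v rep d γ r)
    {x : M} (hx : γ₀ < vM x) :
    (((d : ℤ) ^ s * γ₀ + c : ℤ) : WithTop ℤ) ≤ vM (MulOpposite.op r • x) := by
  obtain ⟨u, hu⟩ := hsurj γ₀
  have hxu : vM (x - u) = γ₀ := (apply_sub_eq_of_lt hsub (hu ▸ hx)).trans hu
  have hnu : vM (-u) = γ₀ := (apply_neg_of_min_le_sub hsub u).trans hu
  have hsplit : MulOpposite.op r • x = MulOpposite.op r • (x - u) - MulOpposite.op r • (-u) := by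
    rw [← smul_sub, sub_neg_eq_add, sub_add_cancel]
  calc (((d : ℤ) ^ s * γ₀ + c : ℤ) : WithTop ℤ)
      = min (vM (MulOpposite.op r • (x - u))) (vM (MulOpposite.op r • (-u))) := by
        rw [valuation_smul_of_eq hsmul hγ₀ le_rfl hxu, valuation_smul_of_eq hsmul hγ₀ le_rfl hnu,
          min_self]
    _ ≤ vM (MulOpposite.op r • x) := hsplit ▸ hsub _ _

end ValuedModule

theorem eq_of_mul_add_eq_mul_add {D a b c c' : ℤ} (hc : 0 ≤ c) (hcD : c < D) (hc' : 0 ≤ c')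
    (hc'D : c' < D) (h : D * a + c = D * b + c') : c = c' := by
  simpa [Int.emod_eq_of_lt, hc, hcD, hc', hc'D] using congrArg (· % D) h

theorem one_lt_of_ne_of_lt_pow {d s : ℕ} {c c' : ℤ} (hne : c ≠ c') (hc : 0 ≤ c)
    (hcd : c < (d : ℤ) ^ s) (hc' : 0 ≤ c') (hc'd : c' < (d : ℤ) ^ s) : 1 < d := by
  have hpow : (1 : ℤ) ^ s < (d : ℤ) ^ s := by rw [one_pow]; omega
  exact_mod_cast lt_of_pow_lt_pow_left₀ s (Int.natCast_nonneg d) hpow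

theorem stmt_17_general {K : Type*} [Field K]
    (v : K → WithTop ℤ)
    {R : Type*} [Ring R]
    (rep : R ≃+ (ℕ →₀ K))
    (d : ℕ)
    {M : Type*} [AddCommGroup M] [Module Rᵐᵒᵖ M]
    (vM : M → WithTop ℤ)
    (hMsub : ∀ x y : M, min (vM x) (vM y) ≤ vM (x - y))
    (hMsurj : Function.Surjective vM)
    (hM3 : ∀ (x : M) (r : R),
      (∀ γ : ℤ, vM x = (γ : WithTop ℤ) → ¬ IsJump v rep d γ r) →
      vM (MulOpposite.op r • x) = act v rep d (vM x) r)
    (m s : ℕ) (g : Fin m → R)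
    (hdeg : ∀ i, s ∈ (rep (g i)).support ∧ ∀ l ∈ (rep (g i)).support, l ≤ s)
    (hlead : ∀ i j, i ≠ j → v (rep (g i) s) ≠ v (rep (g j) s))
    (hrange : ∀ i, ∃ c : ℤ, v (rep (g i) s) = (c : WithTop ℤ) ∧ 0 ≤ c ∧ c < (d : ℤ) ^ s) :
    ∀ i j, i ≠ j → ∃ γ : ℤ, ∀ x y : M,
      vM (MulOpposite.op (g i) • x) = vM (MulOpposite.op (g j) • y) →
      (γ : WithTop ℤ) ≤ vM (MulOpposite.op (g i) • x) := by
  intro i j hij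
  obtain ⟨ci, hci, hci0, hcid⟩ := hrange i
  obtain ⟨cj, hcj, hcj0, hcjd⟩ := hrange j
  have hcij : ci ≠ cj := fun h => hlead i j hij (by rw [hci, hcj, h])
  have hd : 1 < d := one_lt_of_ne_of_lt_pow hcij hci0 hcid hcj0 hcjd
  obtain ⟨γ₀, hγ₀⟩ := eventually_atBot.mp
    ((eventually_act_eq_and_not_isJump hd (hdeg i).1 (hdeg i).2 hci).and
      (eventually_act_eq_and_not_isJump hd (hdeg j).1 (hdeg j).2 hcj))
  have hγi := fun γ hγ => (hγ₀ γ hγ).1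
  have hγj := fun γ hγ => (hγ₀ γ hγ).2
  refine ⟨(d : ℤ) ^ s * γ₀, fun x y hxy => ?_⟩
  rcases lt_or_ge (γ₀ : WithTop ℤ) (vM x) with hx | hx
  · exact (WithTop.coe_le_coe.mpr (le_add_of_nonneg_right hci0)).trans
      (le_valuation_smul_of_lt hMsub hMsurj hM3 hγi hx)
  rcases lt_or_ge (γ₀ : WithTop ℤ) (vM y) with hy | hy
  · exact hxy ▸ (WithTop.coe_le_coe.mpr (le_add_of_nonneg_right hcj0)).trans
      (le_valuation_smul_of_lt hMsub hMsurj hM3 hγj hy)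
  obtain ⟨a, hxa, ha⟩ := WithTop.le_coe_iff.mp hx
  obtain ⟨b, hyb, hb⟩ := WithTop.le_coe_iff.mp hy
  rw [valuation_smul_of_eq hM3 hγi ha hxa, valuation_smul_of_eq hM3 hγj hb hyb] at hxy
  exact absurd (eq_of_mul_add_eq_mul_add hci0 hcid hcj0 hcjd (WithTop.coe_injective hxy)) hcij

/-- in a valued `R`-module `(M, vM)`, if `g_1, ..., g_m ∈ R` all have the
same degree `s` and their leading coefficients have pairwise distinct valuations in
`{0, ..., d^s − 1}`, then for `i ≠ j` the subgroups `M·g_i` and `M·g_j` are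
pseudo-orthogonal: `v(M·g_i) ∩ v(M·g_j)` lies in a final segment of `ℤ ∪ {∞}`. -/
theorem stmt_17 (p k : ℕ) (hp : p.Prime) (hk : 1 ≤ k)
    {K : Type*} [Field K] [CharP K p]
    (v : K → WithTop ℤ)
    (hv0 : ∀ x, v x = ⊤ ↔ x = 0)
    (hvmul : ∀ x y, v (x * y) = v x + v y)
    (hvadd : ∀ x y, min (v x) (v y) ≤ v (x + y))
    {R : Type*} [Ring R] (ι : K →+* R) (t : R)
    (hcomm : ∀ a : K, t * ι (a ^ p ^ k) = ι a * t)
    (rep : R ≃+ (ℕ →₀ K))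
    (hrep : ∀ f : ℕ →₀ K, rep.symm f = f.sum fun n a => t ^ n * ι a)
    (d : ℕ) (hd : d = p ^ k)
    (α : Fin d → K)
    (hbasis : ∀ x : K, ∃! c : Fin d → K, x = ∑ j : Fin d, (c j) ^ d * α j)
    {M : Type*} [AddCommGroup M] [Module Rᵐᵒᵖ M]
    (vM : M → WithTop ℤ)
    (hM0 : ∀ x : M, vM x = ⊤ ↔ x = 0)
    (hMadd : ∀ x y : M, min (vM x) (vM y) ≤ vM (x + y))
    (hMsub : ∀ x y : M, min (vM x) (vM y) ≤ vM (x - y))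
    (hMsurj : Function.Surjective vM)
    (hMdec : ∀ x : M, ∃! c : Fin d → M,
      x = ∑ i : Fin d, MulOpposite.op (t * ι (α i)) • c i)
    (hM3 : ∀ (x : M) (r : R),
      (∀ γ : ℤ, vM x = (γ : WithTop ℤ) → ¬ IsJump v rep d γ r) →
      vM (MulOpposite.op r • x) = act v rep d (vM x) r)
    (m s : ℕ) (g : Fin m → R)
    (hdeg : ∀ i, s ∈ (rep (g i)).support ∧ ∀ l ∈ (rep (g i)).support, l ≤ s)
    (hlead : ∀ i j, i ≠ j → v (rep (g i) s) ≠ v (rep (g j) s))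
    (hrange : ∀ i, ∃ c : ℤ, v (rep (g i) s) = (c : WithTop ℤ) ∧ 0 ≤ c ∧ c < (d : ℤ) ^ s) :
    ∀ i j, i ≠ j → ∃ γ : ℤ, ∀ x y : M,
      vM (MulOpposite.op (g i) • x) = vM (MulOpposite.op (g j) • y) →
      (γ : WithTop ℤ) ≤ vM (MulOpposite.op (g i) • x) :=
  stmt_17_general v rep d vM hMsub hMsurj hM3 m s g hdeg hlead hrange
end

section
/- Let (M, v) be a valued module over R, β a valuation independent basis of K over K^φ (members of β have pairwise distinct valuations in {0, ..., d−1}), and q = t^s·a + (lower degree terms) ∈ R of degree s. Then there is a unique index j = j(q) in the induced basis β(s) such that M·q and M·t^s·β_j are m-immediate, and consequently C := Σ_{j' ≠ j} M·t^s·β_{j'} is a pseudo-complement of M·q in M. -/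
/-- The subgroup `M·r` of a right `R`-module `M` (a module over `Rᵐᵒᵖ`). -/
def Mdot {R : Type*} [Ring R] (M : Type*) [AddCommGroup M] [Module Rᵐᵒᵖ M]
    (r : R) : AddSubgroup M where
  carrier := Set.range fun x : M => MulOpposite.op r • x
  zero_mem' := ⟨0, by simp⟩
  add_mem' := by rintro _ _ ⟨a, rfl⟩ ⟨b, rfl⟩; exact ⟨a + b, by simp [smul_add]⟩
  neg_mem' := by rintro _ ⟨a, rfl⟩; exact ⟨-a, by simp [smul_neg]⟩

section Ultrametric

variable {G Γ : Type*} [AddCommGroup G] [LinearOrder Γ] {v : G → Γ}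

theorem val_neg_of_val_sub [OrderTop Γ] (h0 : v 0 = ⊤)
    (hsub : ∀ x y, min (v x) (v y) ≤ v (x - y)) (x : G) : v (-x) = v x := by
  have h₁ := hsub 0 x
  have h₂ := hsub 0 (-x)
  simp only [h0, min_top_left, zero_sub, neg_neg] at h₁ h₂
  exact le_antisymm h₂ h₁

theorem val_add_eq_left_of_lt (hadd : ∀ x y, min (v x) (v y) ≤ v (x + y))
    (hneg : ∀ x, v (-x) = v x) {x y : G} (h : v x < v y) : v (x + y) = v x := by
  refine le_antisymm ?_ ((le_min le_rfl h.le).trans (hadd x y))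
  by_contra! hlt
  have := hadd (x + y) (-y)
  rw [add_neg_cancel_right, hneg] at this
  exact this.not_gt (lt_min hlt h)

theorem le_val_sum [OrderTop Γ] (h0 : v 0 = ⊤) (hadd : ∀ x y, min (v x) (v y) ≤ v (x + y))
    {ι : Type*} {S : Finset ι} {z : ι → G} {w : Γ} (h : ∀ i ∈ S, w ≤ v (z i)) :
    w ≤ v (∑ i ∈ S, z i) :=
  Finset.sum_induction z (w ≤ v ·) (fun _ _ ha hb => (le_min ha hb).trans (hadd _ _))
    (h0 ▸ le_top) h

theorem lt_val_sum [OrderTop Γ] (h0 : v 0 = ⊤) (hadd : ∀ x y, min (v x) (v y) ≤ v (x + y))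
    {ι : Type*} {S : Finset ι} {z : ι → G} {w : Γ} (hw : w < ⊤) (h : ∀ i ∈ S, w < v (z i)) :
    w < v (∑ i ∈ S, z i) :=
  Finset.sum_induction z (w < v ·) (fun _ _ ha hb => (lt_min ha hb).trans_le (hadd _ _))
    (h0 ▸ hw) h

theorem val_sum_eq_inf [OrderTop Γ] (h0 : v 0 = ⊤)
    (hadd : ∀ x y, min (v x) (v y) ≤ v (x + y)) (hneg : ∀ x, v (-x) = v x)
    {ι : Type*} (S : Finset ι) (z : ι → G)
    (h : ∀ i ∈ S, ∀ j ∈ S, i ≠ j → v (z i) = v (z j) → v (z i) = ⊤) :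
    v (∑ i ∈ S, z i) = S.inf fun i => v (z i) := by
  induction S using Finset.cons_induction with
  | empty => simp [h0]
  | cons i S hi ih =>
    rw [Finset.sum_cons, Finset.inf_cons]
    have hS := ih fun a ha b hb => h a (Finset.mem_cons_of_mem ha) b (Finset.mem_cons_of_mem hb)
    rcases lt_trichotomy (v (z i)) (v (∑ j ∈ S, z j)) with hlt | heq | hgt
    · rw [val_add_eq_left_of_lt hadd hneg hlt, min_eq_left (hS ▸ hlt.le)]
    · rw [← hS, ← heq, min_self]
      by_cases htop : v (z i) = ⊤
      · rw [htop, ← top_le_iff, ← min_self ⊤]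
        exact (le_of_eq (by rw [← htop, heq])).trans (hadd _ _)
      · obtain ⟨j, hj, hji⟩ := S.exists_mem_eq_inf
          (Finset.nonempty_iff_ne_empty.mpr fun hSe => htop (by simp [heq, hSe, h0]))
          fun j => v (z j)
        exact absurd (h i (Finset.mem_cons_self i S) j (Finset.mem_cons_of_mem hj)
          (fun hij => hi (hij ▸ hj)) (by rw [heq, hS, hji])) htop
    · rw [add_comm, val_add_eq_left_of_lt hadd hneg hgt, hS, min_eq_right (hS ▸ hgt.le)]

theorem exists_dominant_summand [OrderTop Γ] (h0 : v 0 = ⊤)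
    (hadd : ∀ x y, min (v x) (v y) ≤ v (x + y)) (hneg : ∀ x, v (-x) = v x)
    {ι : Type*} [Fintype ι] (z : ι → G) (h : ∀ i j, i ≠ j → v (z i) = v (z j) → v (z i) = ⊤)
    (hne : v (∑ i, z i) ≠ ⊤) :
    ∃ f, v (∑ i, z i) = v (z f) ∧ ∀ g ≠ f, v (z f) < v (z g) := by
  have hsum := val_sum_eq_inf h0 hadd hneg Finset.univ z fun i _ j _ => h i j
  have : Nonempty ι := by
    by_contra hι
    simp [not_nonempty_iff.mp hι, h0] at hne
  obtain ⟨f, -, hf⟩ := Finset.univ.exists_mem_eq_inf Finset.univ_nonempty fun i => v (z i)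
  refine ⟨f, hsum.trans hf, fun g hg => lt_of_le_of_ne ?_ fun hfg => ?_⟩
  · exact hf ▸ Finset.inf_le (Finset.mem_univ g)
  · exact hne (hsum.trans hf ▸ h f g hg.symm hfg)

end Ultrametric

/-- Successive approximation: each step raises the value of the error, and since values are
integers, finitely many steps reach any radius. -/
theorem exists_le_val_sub_sub {G : Type*} [AddCommGroup G] {v : G → WithTop ℤ}
    (A C : AddSubgroup G) (Γ : ℤ)
    (hstep : ∀ z, v z < Γ → ∃ a ∈ A, ∃ c ∈ C, v z < v (z - a - c)) (z : G) :
    ∃ a ∈ A, ∃ c ∈ C, (Γ : WithTop ℤ) ≤ v (z - a - c) := by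
  have key : ∀ n : ℕ, ∀ z, ((Γ - n : ℤ) : WithTop ℤ) ≤ v z →
      ∃ a ∈ A, ∃ c ∈ C, (Γ : WithTop ℤ) ≤ v (z - a - c) := by
    intro n
    induction n with
    | zero => exact fun z hz => ⟨0, A.zero_mem, 0, C.zero_mem, by simpa using hz⟩
    | succ n ih =>
      intro z hz
      by_cases hzΓ : (Γ : WithTop ℤ) ≤ v z
      · exact ⟨0, A.zero_mem, 0, C.zero_mem, by simpa using hzΓ⟩
      obtain ⟨a, ha, c, hc, hlt⟩ := hstep z (not_le.mp hzΓ)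
      have hn : ((Γ - n : ℤ) : WithTop ℤ) ≤ v (z - a - c) := by
        cases h : v (z - a - c) with
        | top => exact le_top
        | coe m =>
          have := hz.trans_lt (h ▸ hlt)
          norm_cast at this ⊢
          omega
      obtain ⟨a', ha', c', hc', hle⟩ := ih _ hn
      refine ⟨a + a', A.add_mem ha ha', c + c', C.add_mem hc hc', ?_⟩
      rwa [show z - (a + a') - (c + c') = z - a - c - a' - c' by abel]
  cases h : v z with
  | top => exact ⟨0, A.zero_mem, 0, C.zero_mem, by simp [h]⟩
  | coe γ =>
    refine key (Γ - γ).toNat z (h ▸ ?_)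
    norm_cast
    omega

theorem val_one_eq_zero {K : Type*} [MulZeroOneClass K] [Nontrivial K] {v : K → WithTop ℤ}
    (hv0 : ∀ x, v x = ⊤ ↔ x = 0) (hvmul : ∀ x y, v (x * y) = v x + v y) : v 1 = 0 := by
  obtain ⟨c, hc⟩ := WithTop.ne_top_iff_exists.mp ((hv0 1).not.mpr one_ne_zero)
  have h := hvmul 1 1
  rw [mul_one, ← hc] at h
  rw [← hc]
  norm_cast at h ⊢
  omega

theorem eventually_pow_mul_add_lt {d : ℕ} (hd : 1 < d) {m s : ℕ} (hms : m < s) (A B : ℤ) :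
    ∀ᶠ γ : ℤ in Filter.atBot, (d : ℤ) ^ s * γ + A < (d : ℤ) ^ m * γ + B := by
  filter_upwards [Filter.eventually_le_atBot 0, Filter.eventually_lt_atBot (B - A)] with γ h0 h1
  have : (d : ℤ) ^ m < (d : ℤ) ^ s := pow_lt_pow_right₀ (by exact_mod_cast hd) hms
  nlinarith

theorem AddValuation.map_prod {K Γ : Type*} [CommRing K] [LinearOrderedAddCommMonoidWithTop Γ]
    (v : AddValuation K Γ) {ι : Type*} (S : Finset ι) (x : ι → K) :
    v (∏ i ∈ S, x i) = ∑ i ∈ S, v (x i) := by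
  induction S using Finset.cons_induction with
  | empty => simp
  | cons i S hi ih => rw [Finset.prod_cons, Finset.sum_cons, v.map_mul, ih]

theorem Fintype.sum_fin_succ_pi {α A : Type*} [Fintype α] [AddCommMonoid A] {s : ℕ}
    (F : (Fin (s + 1) → α) → A) : ∑ g, F g = ∑ i, ∑ g : Fin s → α, F (Fin.cons i g) := by
  rw [← Fintype.sum_prod_type']
  exact (Fintype.sum_equiv (Fin.consEquiv fun _ => α) _ _ fun _ => rfl).symm

section ValuedModule

open MulOpposite Function

variable {R : Type*} [Ring R] {M : Type*} [AddCommGroup M] [Module Rᵐᵒᵖ M] {vM : M → WithTop ℤ}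

theorem mdot_mul_of_isUnit {u : R} (hu : IsUnit u) (r : R) : Mdot M (u * r) = Mdot M r := by
  obtain ⟨u, rfl⟩ := hu
  ext y
  constructor
  · rintro ⟨x, rfl⟩
    exact ⟨op (u : R) • x, by dsimp only; rw [← mul_smul, ← op_mul]⟩
  · rintro ⟨x, rfl⟩
    exact ⟨op (↑u⁻¹ : R) • x, by
      dsimp only; rw [← mul_smul, ← op_mul, ← mul_assoc, Units.inv_mul, one_mul]⟩

theorem mImm_mdot_of_lt_val_sub (hadd : ∀ x y, min (vM x) (vM y) ≤ vM (x + y))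
    (hneg : ∀ x, vM (-x) = vM x) {q r : R} (Γ : ℤ)
    (h : ∀ x : M, (vM (op q • x) < Γ ∨ vM (op r • x) < Γ) →
      vM (op r • x) < vM (op q • x - op r • x)) :
    MImm vM (Mdot M q) (Mdot M r) := by
  have heq : ∀ x : M, (vM (op q • x) < Γ ∨ vM (op r • x) < Γ) →
      vM (op q • x) = vM (op r • x) := fun x hx => by
    rw [← val_add_eq_left_of_lt hadd hneg (h x hx), add_sub_cancel]
  refine ⟨Γ, ?_, ?_⟩
  · rintro _ ⟨x, rfl⟩ hx
    exact ⟨_, ⟨x, rfl⟩, (heq x (.inl hx)).symm, heq x (.inl hx) ▸ h x (.inl hx)⟩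
  · rintro _ ⟨x, rfl⟩ hx
    refine ⟨_, ⟨x, rfl⟩, heq x (.inr hx), ?_⟩
    rw [← neg_sub, hneg]
    exact h x (.inr hx)

variable {ι : Type*} {n : ℕ} {r : ι → R} {E : ι → ℤ}

theorem eq_of_mul_add_eq (hE : Injective fun g => (E g : ZMod n)) {a b : ℤ} {g g' : ι}
    (h : n * a + E g = n * b + E g') : g = g' :=
  hE (by simpa using congrArg (fun z : ℤ => (z : ZMod n)) h)

theorem exists_val_smul_eq
    (hr : ∀ g y, vM (op (r g) • y) = WithTop.map ((n : ℤ) * ·) (vM y) + E g)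
    {g : ι} {y : M} (h : vM (op (r g) • y) ≠ ⊤) :
    ∃ γ : ℤ, vM (op (r g) • y) = ((n * γ + E g : ℤ) : WithTop ℤ) := by
  rw [hr] at h ⊢
  cases hy : vM y with
  | top => simp [hy] at h
  | coe γ => exact ⟨γ, rfl⟩

theorem eq_of_val_smul_eq
    (hr : ∀ g y, vM (op (r g) • y) = WithTop.map ((n : ℤ) * ·) (vM y) + E g)
    (hE : Injective fun g => (E g : ZMod n)) {g g' : ι} {y y' : M}
    (h : vM (op (r g) • y) = vM (op (r g') • y')) (htop : vM (op (r g) • y) ≠ ⊤) : g = g' := by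
  obtain ⟨γ, hγ⟩ := exists_val_smul_eq hr htop
  obtain ⟨γ', hγ'⟩ := exists_val_smul_eq hr (h ▸ htop)
  exact eq_of_mul_add_eq hE (WithTop.coe_injective (hγ.symm.trans (h.trans hγ')))

theorem val_sum_smul_eq_inf [Fintype ι] (h0 : vM 0 = ⊤)
    (hadd : ∀ x y, min (vM x) (vM y) ≤ vM (x + y)) (hneg : ∀ x, vM (-x) = vM x)
    (hr : ∀ g y, vM (op (r g) • y) = WithTop.map ((n : ℤ) * ·) (vM y) + E g)
    (hE : Injective fun g => (E g : ZMod n)) (w : ι → M) :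
    vM (∑ g, op (r g) • w g) = Finset.univ.inf fun g => vM (op (r g) • w g) :=
  val_sum_eq_inf h0 hadd hneg _ _ fun _ _ _ _ hne heq =>
    by_contra fun htop => hne (eq_of_val_smul_eq hr hE heq htop)

/-- Below any radius `M·r_g` has elements of finite value, and each such value determines `g`. -/
theorem eq_of_mImm_of_mImm (hn : 0 < n)
    (hr : ∀ g y, vM (op (r g) • y) = WithTop.map ((n : ℤ) * ·) (vM y) + E g)
    (hE : Injective fun g => (E g : ZMod n)) (hsurj : Surjective vM) {q : R} {f g : ι}
    (hf : MImm vM (Mdot M q) (Mdot M (r f))) (hg : MImm vM (Mdot M q) (Mdot M (r g))) :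
    f = g := by
  obtain ⟨Γf, hqf, -⟩ := hf
  obtain ⟨Γg, -, hgq⟩ := hg
  obtain ⟨γ, hγ⟩ : ∃ γ : ℤ, n * γ + E g < min Γf Γg := by
    refine ⟨min 0 (min Γf Γg - E g) - 1, ?_⟩
    have : (1 : ℤ) ≤ n := by exact_mod_cast hn
    nlinarith [min_le_left 0 (min Γf Γg - E g), min_le_right 0 (min Γf Γg - E g)]
  obtain ⟨y, hy⟩ := hsurj γ
  have hvb : vM (op (r g) • y) = ((n * γ + E g : ℤ) : WithTop ℤ) := by rw [hr, hy]; rfl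
  obtain ⟨a, ha, hab, -⟩ := hgq _ ⟨y, rfl⟩ <| by
    rw [hvb]; exact_mod_cast hγ.trans_le (min_le_right _ _)
  obtain ⟨_, ⟨y', rfl⟩, hba, -⟩ := hqf a ha <| by
    rw [hab, hvb]; exact_mod_cast hγ.trans_le (min_le_left _ _)
  exact eq_of_val_smul_eq hr hE (hba.trans hab) (by rw [hba, hab, hvb]; exact WithTop.coe_ne_top)

theorem exists_eq_sum_of_mem_iSup_ne [Fintype ι] [DecidableEq ι] {f : ι} {b : M}
    (hb : b ∈ ⨆ g ∈ {g | g ≠ f}, Mdot M (r g)) :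
    ∃ w : ι → M, w f = 0 ∧ b = ∑ g, op (r g) • w g := by
  refine AddSubgroup.iSup_induction (C := fun b => ∃ w : ι → M, w f = 0 ∧ b = ∑ g, op (r g) • w g)
    _ hb (fun g b hb => ?_) ⟨0, rfl, by simp⟩ ?_
  · by_cases hgf : g = f
    · subst hgf
      simp only [Set.mem_ofPred_eq, ne_eq, not_true_eq_false, not_false_eq_true, iSup_neg,
        AddSubgroup.mem_bot] at hb
      exact ⟨0, rfl, by simp [hb]⟩
    rw [Set.mem_ofPred_eq, iSup_pos hgf] at hb
    obtain ⟨y, rfl⟩ := hb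
    refine ⟨Pi.single g y, by simp [Ne.symm hgf], ?_⟩
    rw [Fintype.sum_eq_single g fun g' hg' => by rw [Pi.single_eq_of_ne hg', smul_zero],
      Pi.single_eq_same]
  · rintro _ _ ⟨w, hwf, rfl⟩ ⟨w', hwf', rfl⟩
    exact ⟨w + w', by simp [hwf, hwf'], by simp [smul_add, Finset.sum_add_distrib]⟩

theorem pComp_iSup_ne [Fintype ι] (h0 : vM 0 = ⊤)
    (hadd : ∀ x y, min (vM x) (vM y) ≤ vM (x + y)) (hneg : ∀ x, vM (-x) = vM x)
    (hr : ∀ g y, vM (op (r g) • y) = WithTop.map ((n : ℤ) * ·) (vM y) + E g)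
    (hE : Injective fun g => (E g : ZMod n))
    (hdec : ∀ x : M, ∃ w : ι → M, x = ∑ g, op (r g) • w g)
    {q : R} {f : ι} (hf : MImm vM (Mdot M q) (Mdot M (r f))) :
    PComp vM (Mdot M q) (⨆ g ∈ {g | g ≠ f}, Mdot M (r g)) := by
  classical
  obtain ⟨Γ, hqf, hfq⟩ := hf
  refine ⟨⟨Γ, exists_le_val_sub_sub _ _ Γ fun z hz => ?_⟩, Γ, fun a ha b hb hab => ?_⟩
  · obtain ⟨w, rfl⟩ := hdec z
    have hc : ∑ g ∈ Finset.univ.erase f, op (r g) • w g ∈ ⨆ g ∈ {g | g ≠ f}, Mdot M (r g) :=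
      AddSubgroup.sum_mem _ fun g hg => AddSubgroup.mem_iSup_of_mem g <|
        AddSubgroup.mem_iSup_of_mem (Finset.ne_of_mem_erase hg) ⟨w g, rfl⟩
    have hsub : ∀ a, ∑ g, op (r g) • w g - a - ∑ g ∈ Finset.univ.erase f, op (r g) • w g =
        op (r f) • w f - a := fun a => by
      rw [← Finset.add_sum_erase _ _ (Finset.mem_univ f)]; abel
    have hzf : vM (∑ g, op (r g) • w g) ≤ vM (op (r f) • w f) := by
      rw [val_sum_smul_eq_inf h0 hadd hneg hr hE]
      exact Finset.inf_le (Finset.mem_univ f)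
    by_cases hfΓ : vM (op (r f) • w f) < Γ
    · obtain ⟨a, ha, -, hlt⟩ := hfq _ ⟨w f, rfl⟩ hfΓ
      exact ⟨a, ha, _, hc, by rw [hsub]; exact hzf.trans_lt hlt⟩
    · refine ⟨0, AddSubgroup.zero_mem _, _, hc, ?_⟩
      rw [hsub, sub_zero]
      exact hz.trans_le (not_lt.mp hfΓ)
  · by_contra! hlt
    obtain ⟨_, ⟨y, rfl⟩, hya, -⟩ := hqf a ha hlt
    obtain ⟨w, hwf, rfl⟩ := exists_eq_sum_of_mem_iSup_ne hb
    obtain ⟨g, -, hg⟩ := Finset.univ.exists_mem_eq_inf ⟨f, Finset.mem_univ f⟩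
      fun g => vM (op (r g) • w g)
    rw [val_sum_smul_eq_inf h0 hadd hneg hr hE, hg] at hab
    obtain rfl : f = g := eq_of_val_smul_eq hr hE (hya.trans hab) (hya ▸ hlt.ne_top)
    rw [hwf, smul_zero, h0] at hab
    exact not_top_lt (hab ▸ hlt)

end ValuedModule

section InducedBasis

open MulOpposite Function

variable {K : Type*} [CommRing K] {d : ℕ} {β : Fin d → K}

/-- The basis `β(s)` of `K` over `K^{φ^s}` induced by `β`, indexed by the base-`d` digit strings
`g : Fin s → Fin d`. -/
def inducedBasis (β : Fin d → K) (s : ℕ) (g : Fin s → Fin d) : K :=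
  ∏ j : Fin s, β (g j) ^ d ^ (j : ℕ)

theorem inducedBasis_cons {s : ℕ} (i : Fin d) (g : Fin s → Fin d) :
    inducedBasis β (s + 1) (Fin.cons i g) = inducedBasis β s g ^ d * β i := by
  rw [inducedBasis, Fin.prod_univ_succ, Fin.cons_zero, Fin.val_zero, pow_zero, pow_one,
    mul_comm, inducedBasis, ← Finset.prod_pow]
  congr 1
  refine Finset.prod_congr rfl fun j _ => ?_
  rw [Fin.cons_succ, Fin.val_succ, ← pow_mul, pow_succ]

theorem exists_eq_sum_pow_mul_inducedBasis {p k : ℕ} [ExpChar K p] (hd : d = p ^ k)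
    (hbasis : ∀ x : K, ∃ c : Fin d → K, x = ∑ j, c j ^ d * β j) (s : ℕ) (x : K) :
    ∃ c : (Fin s → Fin d) → K, x = ∑ g, c g ^ d ^ s * inducedBasis β s g := by
  have hφ : ∀ x : K, x ^ d = iterateFrobenius K p k x := fun x => by
    rw [iterateFrobenius_def, hd]
  induction s generalizing x with
  | zero => exact ⟨fun _ => x, by simp [inducedBasis]⟩
  | succ s ih =>
    obtain ⟨c, hc⟩ := hbasis x
    choose y hy using fun i => ih (c i)
    refine ⟨fun g => y (g 0) (Fin.tail g), ?_⟩
    simp only [Fintype.sum_fin_succ_pi, Fin.cons_zero, Fin.tail_cons, inducedBasis_cons]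
    rw [hc]
    refine Finset.sum_congr rfl fun i _ => ?_
    rw [hy i, hφ, map_sum, Finset.sum_mul]
    refine Finset.sum_congr rfl fun g _ => ?_
    rw [← hφ]
    ring

theorem val_inducedBasis (v : AddValuation K (WithTop ℤ)) {e : Fin d → Fin d}
    (he : ∀ j, v (β j) = ((e j : ℕ) : ℤ)) (s : ℕ) (g : Fin s → Fin d) :
    v (inducedBasis β s g) = ((finFunctionFinEquiv (e ∘ g) : ℕ) : ℤ) := by
  rw [inducedBasis, v.map_prod, finFunctionFinEquiv_apply]
  push_cast
  refine Finset.sum_congr rfl fun j _ => ?_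
  rw [v.map_pow, he, comp_apply, ← WithTop.coe_nsmul, nsmul_eq_mul, mul_comm]
  norm_cast

theorem injective_finFunctionFinEquiv_comp {s : ℕ} {e : Fin d → Fin d} (he : Injective e) :
    Injective fun g : Fin s → Fin d =>
      (((finFunctionFinEquiv (e ∘ g) : ℕ) : ℤ) : ZMod (d ^ s)) := by
  intro g g' h
  simp only [Int.cast_natCast, ZMod.natCast_eq_natCast_iff', Nat.mod_eq_of_lt (Fin.is_lt _)] at h
  have := finFunctionFinEquiv.injective (Fin.ext h)
  exact funext fun j => he (congrFun this j)

variable {R : Type*} [Ring R] (ι : K →+* R) (t : R)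

theorem t_pow_mul_comm (hcomm : ∀ a : K, t * ι (a ^ d) = ι a * t) (n : ℕ) (a : K) :
    t ^ n * ι (a ^ d ^ n) = ι a * t ^ n := by
  induction n generalizing a with
  | zero => simp
  | succ n ih =>
    rw [pow_succ' t, pow_succ' d, pow_mul, mul_assoc, ih, ← mul_assoc, hcomm, mul_assoc]

theorem exists_eq_sum_smul_inducedBasis {M : Type*} [AddCommGroup M] [Module Rᵐᵒᵖ M]
    (hcomm : ∀ a : K, t * ι (a ^ d) = ι a * t)
    (hdec : ∀ x : M, ∃ c : Fin d → M, x = ∑ i, op (t * ι (β i)) • c i) (s : ℕ) (x : M) :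
    ∃ w : (Fin s → Fin d) → M, x = ∑ g, op (t ^ s * ι (inducedBasis β s g)) • w g := by
  induction s generalizing x with
  | zero => exact ⟨fun _ => x, by simp [inducedBasis]⟩
  | succ s ih =>
    obtain ⟨c, hc⟩ := hdec x
    choose y hy using fun i => ih (c i)
    refine ⟨fun g => y (g 0) (Fin.tail g), ?_⟩
    simp only [Fintype.sum_fin_succ_pi, Fin.cons_zero, Fin.tail_cons, inducedBasis_cons]
    rw [hc]
    refine Finset.sum_congr rfl fun i _ => ?_
    rw [hy i, Finset.smul_sum]
    refine Finset.sum_congr rfl fun g _ => ?_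
    rw [← mul_smul, ← op_mul, map_mul, pow_succ, mul_assoc, ← mul_assoc (ι _) t, ← hcomm,
      mul_assoc, mul_assoc]

end InducedBasis

theorem exists_injective_val_eq {K : Type*} {d : ℕ} {v : K → WithTop ℤ} {β : Fin d → K}
    (hvalind : ∀ i j : Fin d, i ≠ j → v (β i) ≠ v (β j))
    (hvalrange : ∀ j : Fin d, ∃ c : ℤ, v (β j) = (c : WithTop ℤ) ∧ 0 ≤ c ∧ c < (d : ℤ)) :
    ∃ e : Fin d → Fin d, Function.Injective e ∧ ∀ j, v (β j) = ((e j : ℕ) : ℤ) := by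
  choose c hc h0 hlt using hvalrange
  have hce : ∀ j, v (β j) = (((c j).toNat : ℕ) : ℤ) := fun j => by
    rw [hc, Int.toNat_of_nonneg (h0 j)]
  refine ⟨fun j => ⟨(c j).toNat, by have := hlt j; have := h0 j; omega⟩, fun i j hij => ?_, hce⟩
  by_contra hne
  have : (c i).toNat = (c j).toNat := congrArg Fin.val hij
  exact hvalind i j hne (by rw [hce, hce, this])

section TwistedValuedModule

open MulOpposite Filter

variable {K : Type*} [Field K] {R : Type*} [Ring R] {ι : K →+* R} {t : R}
  {rep : R ≃+ (ℕ →₀ K)} {M : Type*} [AddCommGroup M] [Module Rᵐᵒᵖ M]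
  {v : K → WithTop ℤ} {vM : M → WithTop ℤ} {d : ℕ}

theorem rep_monomial (hrep : ∀ f : ℕ →₀ K, rep.symm f = f.sum fun n a => t ^ n * ι a)
    (n : ℕ) (a : K) : rep (t ^ n * ι a) = Finsupp.single n a := by
  rw [← AddEquiv.eq_symm_apply, hrep, Finsupp.sum_single_index (by simp)]

theorem smul_eq_sum_monomials (hrep : ∀ f : ℕ →₀ K, rep.symm f = f.sum fun n a => t ^ n * ι a)
    (r : R) (x : M) :
    op r • x = ∑ m ∈ (rep r).support, op (t ^ m * ι (rep r m)) • x := by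
  conv_lhs => rw [← rep.symm_apply_apply r, hrep]
  rw [Finsupp.sum, Finset.op_sum, Finset.sum_smul]

theorem val_smul_monomial (hrep : ∀ f : ℕ →₀ K, rep.symm f = f.sum fun n a => t ^ n * ι a)
    (hM3 : ∀ (x : M) (r : R), (∀ γ : ℤ, vM x = γ → ¬ IsJump v rep d γ r) →
      vM (op r • x) = act v rep d (vM x) r)
    (hv0 : v 0 = ⊤) (hM0 : vM 0 = ⊤) (n : ℕ) (a : K) (x : M) :
    vM (op (t ^ n * ι a) • x) = WithTop.map (fun γ : ℤ => (d : ℤ) ^ n * γ) (vM x) + v a := by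
  by_cases ha : a = 0
  · simp [ha, hv0, hM0]
  have hsupp : (rep (t ^ n * ι a)).support = {n} := by
    rw [rep_monomial hrep, Finsupp.support_single n ha]
  have hnj : ∀ γ : ℤ, vM x = γ → ¬ IsJump v rep d γ (t ^ n * ι a) := by
    rintro γ - ⟨m₁, hm₁, m₂, hm₂, hne, -⟩
    rw [hsupp, Finset.mem_singleton] at hm₁ hm₂
    exact hne (hm₁.trans hm₂.symm)
  rw [hM3 x _ hnj, act, hsupp, Finset.inf_singleton, rep_monomial hrep, Finsupp.single_eq_same]

theorem act_le_val_smul (hrep : ∀ f : ℕ →₀ K, rep.symm f = f.sum fun n a => t ^ n * ι a)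
    (hmono : ∀ n a x, vM (op (t ^ n * ι a) • x) =
      WithTop.map (fun γ : ℤ => (d : ℤ) ^ n * γ) (vM x) + v a)
    (hM0 : vM 0 = ⊤) (hadd : ∀ x y, min (vM x) (vM y) ≤ vM (x + y)) (r : R) (x : M) :
    act v rep d (vM x) r ≤ vM (op r • x) := by
  rw [smul_eq_sum_monomials hrep]
  exact le_val_sum hM0 hadd fun m hm => (Finset.inf_le hm).trans_eq (hmono _ _ _).symm

theorem act_mono (r : R) : Monotone fun γ => act v rep d γ r := fun γ γ' h =>
  Finset.inf_mono_fun fun n _ => add_le_add_left (WithTop.monotone_map_iff.mpr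
    (fun _ _ h => mul_le_mul_of_nonneg_left h (by positivity)) h) _

/-- By monotonicity of the tropical action, only elements of small value have small images. -/
theorem exists_val_lt_of_val_smul_lt
    (hrep : ∀ f : ℕ →₀ K, rep.symm f = f.sum fun n a => t ^ n * ι a)
    (hmono : ∀ n a x, vM (op (t ^ n * ι a) • x) =
      WithTop.map (fun γ : ℤ => (d : ℤ) ^ n * γ) (vM x) + v a)
    (hM0 : vM 0 = ⊤) (hadd : ∀ x y, min (vM x) (vM y) ≤ vM (x + y)) (r : R) (G : ℤ) :
    ∃ Γ : ℤ, ∀ x : M, vM (op r • x) < Γ → vM x < G := by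
  obtain ⟨Γ, hΓ⟩ : ∃ Γ : ℤ, (Γ : WithTop ℤ) ≤ act v rep d G r := by
    cases act v rep d G r with
    | top => exact ⟨0, le_top⟩
    | coe Γ => exact ⟨Γ, le_rfl⟩
  refine ⟨Γ, fun x hx => lt_of_not_ge fun hG => hx.not_ge ?_⟩
  exact hΓ.trans ((act_mono r hG).trans (act_le_val_smul hrep hmono hM0 hadd r x))

theorem eventually_lt_val_smul_sub_leading (hd : 1 < d)
    (hrep : ∀ f : ℕ →₀ K, rep.symm f = f.sum fun n a => t ^ n * ι a)
    (hmono : ∀ n a x, vM (op (t ^ n * ι a) • x) =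
      WithTop.map (fun γ : ℤ => (d : ℤ) ^ n * γ) (vM x) + v a)
    (hM0 : vM 0 = ⊤) (hadd : ∀ x y, min (vM x) (vM y) ≤ vM (x + y)) {q : R} {s : ℕ}
    (hsmem : s ∈ (rep q).support) (hsmax : ∀ m ∈ (rep q).support, m ≤ s)
    {κ : Type*} [Fintype κ] [DecidableEq κ] {z : κ → K} {f : κ} (hz : rep q s = ∑ g, z g)
    (hzf : v (z f) ≠ ⊤) (hdom : ∀ g ≠ f, v (z f) < v (z g)) :
    ∀ᶠ γ : ℤ in atBot, ∀ x : M, vM x = γ →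
      vM (op (t ^ s * ι (z f)) • x) < vM (op q • x - op (t ^ s * ι (z f)) • x) := by
  have hsplit : ∀ x : M, op q • x - op (t ^ s * ι (z f)) • x =
      ∑ g ∈ Finset.univ.erase f, op (t ^ s * ι (z g)) • x +
        ∑ m ∈ (rep q).support.erase s, op (t ^ m * ι (rep q m)) • x := fun x => by
    rw [smul_eq_sum_monomials hrep q x, ← Finset.add_sum_erase _ _ hsmem, hz, map_sum,
      Finset.mul_sum, Finset.op_sum, Finset.sum_smul,
      ← Finset.add_sum_erase _ _ (Finset.mem_univ f)]
    abel
  obtain ⟨A, hA⟩ := WithTop.ne_top_iff_exists.mp hzf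
  have hlow : ∀ m ∈ (rep q).support.erase s, ∀ᶠ γ : ℤ in atBot,
      ((d : ℤ) ^ s * γ + A : ℤ) < WithTop.map (fun γ : ℤ => (d : ℤ) ^ m * γ) γ + v (rep q m) := by
    intro m hm
    have hms := lt_of_le_of_ne (hsmax m (Finset.mem_of_mem_erase hm)) (Finset.ne_of_mem_erase hm)
    cases v (rep q m) with
    | top => exact .of_forall fun γ => by rw [WithTop.add_top]; exact WithTop.coe_lt_top _
    | coe B =>
      filter_upwards [eventually_pow_mul_add_lt hd hms A B] with γ hγ
      rw [WithTop.map_coe, ← WithTop.coe_add]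
      exact WithTop.coe_lt_coe.mpr hγ
  filter_upwards [(eventually_all_finset _).mpr hlow] with γ hγ x hx
  have hlead : vM (op (t ^ s * ι (z f)) • x) = ((d : ℤ) ^ s * γ + A : ℤ) := by
    rw [hmono, hx, ← hA]; rfl
  rw [hsplit, hlead]
  refine (lt_min (lt_val_sum hM0 hadd (WithTop.coe_lt_top _) fun g hg => ?_)
    (lt_val_sum hM0 hadd (WithTop.coe_lt_top _) fun m hm => ?_)).trans_le (hadd _ _)
  · rw [← hlead, hmono, hmono]
    exact WithTop.add_lt_add_left (by rw [hx, WithTop.map_coe]; exact WithTop.coe_ne_top)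
      (hdom g (Finset.ne_of_mem_erase hg))
  · rw [hmono, hx]
    exact hγ m hm

end TwistedValuedModule

section LeadingTerm

open MulOpposite Filter Function

variable {K : Type*} [Field K] {R : Type*} [Ring R] {ι : K →+* R} {t : R}
  {rep : R ≃+ (ℕ →₀ K)} {M : Type*} [AddCommGroup M] [Module Rᵐᵒᵖ M]
  {vM : M → WithTop ℤ} {d : ℕ} {β : Fin d → K}

theorem val_smul_inducedBasis (v : AddValuation K (WithTop ℤ)) {e : Fin d → Fin d}
    (he : ∀ j, v (β j) = ((e j : ℕ) : ℤ))
    (hmono : ∀ n a x, vM (op (t ^ n * ι a) • x) =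
      WithTop.map (fun γ : ℤ => (d : ℤ) ^ n * γ) (vM x) + v a)
    (s : ℕ) (g : Fin s → Fin d) (y : M) :
    vM (op (t ^ s * ι (inducedBasis β s g)) • y) =
      WithTop.map (((d ^ s : ℕ) : ℤ) * ·) (vM y) + ((finFunctionFinEquiv (e ∘ g) : ℕ) : ℤ) := by
  rw [hmono, val_inducedBasis v he]
  push_cast
  rfl

theorem exists_dominant_inducedBasis_term (v : AddValuation K (WithTop ℤ)) {p k : ℕ}
    [ExpChar K p] (hd : d = p ^ k) (hbasis : ∀ x : K, ∃ c : Fin d → K, x = ∑ j, c j ^ d * β j)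
    {e : Fin d → Fin d} (he_inj : Injective e) (he : ∀ j, v (β j) = ((e j : ℕ) : ℤ))
    (s : ℕ) {a : K} (ha : a ≠ 0) :
    ∃ (c : (Fin s → Fin d) → K) (f : Fin s → Fin d),
      a = ∑ g, c g ^ d ^ s * inducedBasis β s g ∧ c f ≠ 0 ∧
      ∀ g ≠ f, v (c f ^ d ^ s * inducedBasis β s f) < v (c g ^ d ^ s * inducedBasis β s g) := by
  obtain ⟨c, hc⟩ := exists_eq_sum_pow_mul_inducedBasis hd hbasis s a
  have hds : d ^ s ≠ 0 := pow_ne_zero _ (hd ▸ pow_ne_zero _ (expChar_ne_zero K p))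
  have hval : ∀ g, c g ≠ 0 → ∃ γ : ℤ, v (c g ^ d ^ s * inducedBasis β s g) =
      (((d ^ s : ℕ) : ℤ) * γ + (finFunctionFinEquiv (e ∘ g) : ℕ) : ℤ) := fun g hg => by
    obtain ⟨γ, hγ⟩ := WithTop.ne_top_iff_exists.mp (v.ne_top_iff.mpr hg)
    refine ⟨γ, ?_⟩
    rw [v.map_mul, v.map_pow, ← hγ, val_inducedBasis v he, ← WithTop.coe_nsmul, nsmul_eq_mul]
    norm_cast
  have hdist : ∀ g g', g ≠ g' → v (c g ^ d ^ s * inducedBasis β s g) =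
      v (c g' ^ d ^ s * inducedBasis β s g') → v (c g ^ d ^ s * inducedBasis β s g) = ⊤ := by
    intro g g' hgg' hv
    by_contra htop
    have hcg : c g ≠ 0 := fun h => htop (by simp [h, zero_pow hds])
    have hcg' : c g' ≠ 0 := fun h => htop (by simp [hv, h, zero_pow hds])
    obtain ⟨γ, hγ⟩ := hval g hcg
    obtain ⟨γ', hγ'⟩ := hval g' hcg'
    exact hgg' (eq_of_mul_add_eq (injective_finFunctionFinEquiv_comp he_inj)
      (WithTop.coe_injective (hγ.symm.trans (hv.trans hγ'))))
  obtain ⟨f, hf, hdom⟩ := exists_dominant_summand v.map_zero v.map_add v.map_neg _ hdist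
    (hc ▸ v.ne_top_iff.mpr ha)
  refine ⟨c, f, hc, fun hcf => ?_, hdom⟩
  rw [← hc, hcf, zero_pow hds, zero_mul, v.map_zero] at hf
  exact v.ne_top_iff.mpr ha hf

/-- `M·q` is m-immediate to `M·t^s·β(s)_f`, where `f` indexes the dominant term of the top
coefficient of `q` in the basis `β(s)`. -/
theorem exists_mImm_mdot_inducedBasis (v : AddValuation K (WithTop ℤ)) {p k : ℕ} [ExpChar K p]
    (hd : d = p ^ k) (hd1 : 1 < d) (hbasis : ∀ x : K, ∃ c : Fin d → K, x = ∑ j, c j ^ d * β j)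
    {e : Fin d → Fin d} (he_inj : Injective e) (he : ∀ j, v (β j) = ((e j : ℕ) : ℤ))
    (hcomm : ∀ a : K, t * ι (a ^ d) = ι a * t)
    (hrep : ∀ f : ℕ →₀ K, rep.symm f = f.sum fun n a => t ^ n * ι a)
    (hmono : ∀ n a x, vM (op (t ^ n * ι a) • x) =
      WithTop.map (fun γ : ℤ => (d : ℤ) ^ n * γ) (vM x) + v a)
    (hM0 : vM 0 = ⊤) (hadd : ∀ x y, min (vM x) (vM y) ≤ vM (x + y)) (hneg : ∀ x, vM (-x) = vM x)
    {q : R} {s : ℕ} (hsmem : s ∈ (rep q).support) (hsmax : ∀ m ∈ (rep q).support, m ≤ s) :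
    ∃ f, MImm vM (Mdot M q) (Mdot M (t ^ s * ι (inducedBasis β s f))) := by
  obtain ⟨c, f, hc, hcf, hdom⟩ := exists_dominant_inducedBasis_term v hd hbasis he_inj he s
    (Finsupp.mem_support_iff.mp hsmem)
  have hzf : v (c f ^ d ^ s * inducedBasis β s f) ≠ ⊤ := by
    rw [v.map_mul, val_inducedBasis v he]
    exact WithTop.add_ne_top.mpr ⟨v.ne_top_iff.mpr (pow_ne_zero _ hcf), WithTop.coe_ne_top⟩
  have hlead : t ^ s * ι (c f ^ d ^ s * inducedBasis β s f) =
      ι (c f) * (t ^ s * ι (inducedBasis β s f)) := by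
    rw [map_mul, ← mul_assoc, t_pow_mul_comm ι t hcomm, mul_assoc]
  refine ⟨f, ?_⟩
  rw [← mdot_mul_of_isUnit ((isUnit_iff_ne_zero.mpr hcf).map ι) (t ^ s * ι _), ← hlead]
  obtain ⟨G, hG⟩ := eventually_atBot.mp
    (eventually_lt_val_smul_sub_leading hd1 hrep hmono hM0 hadd hsmem hsmax hc hzf hdom)
  obtain ⟨Γq, hΓq⟩ := exists_val_lt_of_val_smul_lt hrep hmono hM0 hadd q G
  obtain ⟨Γr, hΓr⟩ := exists_val_lt_of_val_smul_lt hrep hmono hM0 hadd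
    (t ^ s * ι (c f ^ d ^ s * inducedBasis β s f)) G
  refine mImm_mdot_of_lt_val_sub hadd hneg (min Γq Γr) fun x hx => ?_
  have hxG : vM x < G := hx.elim
    (fun h => hΓq x (h.trans_le (WithTop.coe_le_coe.mpr (min_le_left _ _))))
    (fun h => hΓr x (h.trans_le (WithTop.coe_le_coe.mpr (min_le_right _ _))))
  obtain ⟨γ, hγ, hγG⟩ := WithTop.lt_iff_exists_coe.mp hxG
  exact hG γ (WithTop.coe_lt_coe.mp hγG).le x hγ

end LeadingTerm

/-- let `(M, vM)` be a valued `R`-module, `β` a valuation independent basis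
of `K` over `K^φ`, and `q ∈ R` of degree `s`. Then there is a unique index `f` in the
induced basis `β(s)` with `M·q ≈ M·t^s·β_f` (m-immediate), and consequently
`C = Σ_{f' ≠ f} M·t^s·β_{f'}` is a pseudo-complement of `M·q` in `M`. -/
theorem stmt_18 (p k : ℕ) (hp : p.Prime) (hk : 1 ≤ k)
    {K : Type*} [Field K] [CharP K p]
    (v : K → WithTop ℤ)
    (hv0 : ∀ x, v x = ⊤ ↔ x = 0)
    (hvmul : ∀ x y, v (x * y) = v x + v y)
    (hvadd : ∀ x y, min (v x) (v y) ≤ v (x + y))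
    {R : Type*} [Ring R] (ι : K →+* R) (t : R)
    (hcomm : ∀ a : K, t * ι (a ^ p ^ k) = ι a * t)
    (rep : R ≃+ (ℕ →₀ K))
    (hrep : ∀ f : ℕ →₀ K, rep.symm f = f.sum fun n a => t ^ n * ι a)
    (d : ℕ) (hd : d = p ^ k)
    (β : Fin d → K)
    (hbasis : ∀ x : K, ∃! c : Fin d → K, x = ∑ j : Fin d, (c j) ^ d * β j)
    (hvalind : ∀ i j : Fin d, i ≠ j → v (β i) ≠ v (β j))
    (hvalrange : ∀ j : Fin d, ∃ c : ℤ, v (β j) = (c : WithTop ℤ) ∧ 0 ≤ c ∧ c < (d : ℤ))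
    {M : Type*} [AddCommGroup M] [Module Rᵐᵒᵖ M]
    (vM : M → WithTop ℤ)
    (hM0 : ∀ x : M, vM x = ⊤ ↔ x = 0)
    (hMadd : ∀ x y : M, min (vM x) (vM y) ≤ vM (x + y))
    (hMsub : ∀ x y : M, min (vM x) (vM y) ≤ vM (x - y))
    (hMsurj : Function.Surjective vM)
    (hMdec : ∀ x : M, ∃! c : Fin d → M,
      x = ∑ i : Fin d, MulOpposite.op (t * ι (β i)) • c i)
    (hM3 : ∀ (x : M) (r : R),
      (∀ γ : ℤ, vM x = (γ : WithTop ℤ) → ¬ IsJump v rep d γ r) →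
      vM (MulOpposite.op r • x) = act v rep d (vM x) r)
    (q : R) (s : ℕ)
    (hsmem : s ∈ (rep q).support)
    (hsmax : ∀ m ∈ (rep q).support, m ≤ s) :
    (∃! f : Fin s → Fin d,
      MImm vM (Mdot M q)
        (Mdot M (t ^ s * ι (∏ j : Fin s, β (f j) ^ d ^ (j : ℕ))))) ∧
    ∀ f : Fin s → Fin d,
      MImm vM (Mdot M q)
          (Mdot M (t ^ s * ι (∏ j : Fin s, β (f j) ^ d ^ (j : ℕ)))) →
      PComp vM (Mdot M q)
        (⨆ f' ∈ {f' : Fin s → Fin d | f' ≠ f},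
          Mdot M (t ^ s * ι (∏ j : Fin s, β (f' j) ^ d ^ (j : ℕ)))) := by
  have : ExpChar K p := ExpChar.prime hp
  have hd1 : 1 < d := hd ▸ Nat.one_lt_pow (by omega) hp.one_lt
  have hcomm' : ∀ a : K, t * ι (a ^ d) = ι a * t := hd ▸ hcomm
  let w : AddValuation K (WithTop ℤ) :=
    .of v ((hv0 0).mpr rfl) (val_one_eq_zero hv0 hvmul) hvadd hvmul
  obtain ⟨e, he_inj, he⟩ := exists_injective_val_eq hvalind hvalrange
  have hM0' : vM 0 = ⊤ := (hM0 0).mpr rfl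
  have hMneg := val_neg_of_val_sub hM0' hMsub
  have hmono := val_smul_monomial hrep hM3 ((hv0 0).mpr rfl) hM0'
  have hr := val_smul_inducedBasis (ι := ι) w he hmono s
  have hE := injective_finFunctionFinEquiv_comp (s := s) he_inj
  obtain ⟨f, hf⟩ := exists_mImm_mdot_inducedBasis w hd hd1 (fun x => (hbasis x).exists) he_inj
    he hcomm' hrep hmono hM0' hMadd hMneg hsmem hsmax
  have huniq : ∀ g, MImm vM (Mdot M q) (Mdot M (t ^ s * ι (inducedBasis β s g))) → g = f :=
    fun g hg => (eq_of_mImm_of_mImm (pow_pos (by omega) s) hr hE hMsurj hf hg).symm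
  refine ⟨⟨f, hf, huniq⟩, fun g hg => ?_⟩
  obtain rfl := huniq g hg
  exact pComp_iSup_ne hM0' hMadd hMneg hr hE
    (exists_eq_sum_smul_inducedBasis ι t hcomm' (fun x => (hMdec x).exists) s) hf
end

section
/- Let G be an abelian group with subgroups A and B such that A + B = G. Then A = {x ∈ G : ∀ y, (x − y ∈ A ∧ y ∈ B) → y ∈ A ∩ B}. -/
/-- if `A`, `B` are subgroups of an abelian group `G` with `A + B = G`, then
`A = {x ∈ G : ∀ y, (x − y ∈ A ∧ y ∈ B) → y ∈ A ∩ B}`. -/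
theorem stmt_19 {G : Type*} [AddCommGroup G] (A B : AddSubgroup G)
    (h : ∀ x : G, ∃ a ∈ A, ∃ b ∈ B, x = a + b) :
    (A : Set G) = {x : G | ∀ y : G, (x - y ∈ A ∧ y ∈ B) → y ∈ A ⊓ B} := by
  ext x
  constructor
  · rintro hx y ⟨hxy, hyB⟩
    exact ⟨sub_sub_cancel x y ▸ A.sub_mem hx hxy, hyB⟩
  · intro hx
    obtain ⟨a, ha, b, hb, rfl⟩ := h x
    have hbA : b ∈ A := (hx b ⟨(add_sub_cancel_right a b).symm ▸ ha, hb⟩).1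
    exact A.add_mem ha hbA
end
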